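/- arXiv:1511.00493 — 16 statements merged into one kernel-verified Lean document; each statement's English description precedes it below -/
import Mathlib

section
/- For all real β, γ with βγ > 1, β ≤ γ, and for all x with 0 < x ≤ λ_c where λ_c = (γ/β)^(√(βγ)/(√(βγ)−1)), one has (βx+1)/(x+γ) ≤ 1. -/
/-!
Write `s = √(βγ)` and `u = √(γ/β)`, so that `β = s / u` and `γ = s u`. For `β > 1` the claim is
`(β - 1) λ_c ≤ γ - 1`, i.e. `(s/u - 1) u^(2s/(s-1)) ≤ s u - 1`. Substituting `u = b^(s-1)`, this
becomes `s (b - b⁻¹) ≤ b^s - b^(-s)`, which for `b = e^w` reads `s sinh w ≤ sinh (s w)`: true because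
`sinh` is convex on `[0, ∞)` and vanishes at `0`.
-/

open Real Set

theorem Real.convexOn_sinh_Ici : ConvexOn ℝ (Ici 0) sinh := by
  refine MonotoneOn.convexOn_of_deriv (convex_Ici 0) continuous_sinh.continuousOn
    differentiable_sinh.differentiableOn ?_
  rw [deriv_sinh, interior_Ici]
  exact cosh_strictMonoOn.monotoneOn.mono Ioi_subset_Ici_self

theorem Real.mul_sinh_le_sinh_mul {s w : ℝ} (hs : 1 ≤ s) (hw : 0 ≤ w) :
    s * sinh w ≤ sinh (s * w) := by
  have hs0 : 0 < s := by linarith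
  have h := convexOn_sinh_Ici.2 (mem_Ici.2 (mul_nonneg hs0.le hw)) self_mem_Ici
    (inv_nonneg.2 hs0.le) (sub_nonneg.2 (inv_le_one_of_one_le₀ hs)) (add_sub_cancel _ _)
  simp only [smul_eq_mul, mul_zero, add_zero, sinh_zero, inv_mul_cancel_left₀ hs0.ne'] at h
  rw [← mul_le_mul_iff_of_pos_left hs0, ← mul_assoc, mul_inv_cancel₀ hs0.ne', one_mul] at h
  exact h

theorem mul_sub_inv_le_rpow_sub_inv {b s : ℝ} (hb : 1 ≤ b) (hs : 1 ≤ s) :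
    s * (b - b⁻¹) ≤ b ^ s - (b ^ s)⁻¹ := by
  have hb0 : 0 < b := by linarith
  have h := mul_sinh_le_sinh_mul hs (log_nonneg hb)
  rw [sinh_eq, sinh_eq, exp_neg, exp_neg, exp_log hb0, mul_comm s (log b),
    ← rpow_def_of_pos hb0] at h
  linarith

theorem div_sub_one_mul_sq_rpow_le {u s : ℝ} (hu : 1 ≤ u) (hs : 1 < s) :
    (s / u - 1) * (u ^ 2) ^ (s / (s - 1)) ≤ s * u - 1 := by
  have hu0 : 0 < u := by linarith
  have hs1 : s - 1 ≠ 0 := sub_ne_zero.2 hs.ne'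
  set b := u ^ (s - 1)⁻¹ with hb_def
  have hb : 1 ≤ b := one_le_rpow hu (inv_nonneg.2 (by linarith))
  have hb0 : 0 < b := by linarith
  have hub : u = b ^ s / b := by
    rw [← rpow_sub_one hb0.ne', ← rpow_mul hu0.le, inv_mul_cancel₀ hs1, rpow_one]
  have hlam : (u ^ 2) ^ (s / (s - 1)) = (b ^ s) ^ 2 := by
    rw [hb_def, ← rpow_mul hu0.le, ← rpow_natCast, ← rpow_natCast, ← rpow_mul hu0.le,
      ← rpow_mul hu0.le]
    congr 1
    field_simp
  have hsinh := mul_sub_inv_le_rpow_sub_inv hb hs.le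
  have ha0 : 0 < b ^ s := rpow_pos_of_pos hb0 s
  rw [hlam, hub, ← sub_nonneg]
  set a := b ^ s
  have hdiff :
      s * (a / b) - 1 - (s / (a / b) - 1) * a ^ 2 = a * ((a - a⁻¹) - s * (b - b⁻¹)) := by
    field_simp
    ring
  rw [hdiff]
  exact mul_nonneg ha0.le (sub_nonneg.2 hsinh)

theorem stmt_0_general (β γ x : ℝ) (hβ : 0 < β) (h1 : 1 < β * γ) (hle : β ≤ γ)
    (hx : 0 < x)
    (hxc : x ≤ (γ / β) ^ (Real.sqrt (β * γ) / (Real.sqrt (β * γ) - 1))) :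
    (β * x + 1) / (x + γ) ≤ 1 := by
  have hγ1 : 1 < γ := by nlinarith
  rw [div_le_one (by linarith)]
  rcases le_or_gt β 1 with hβ1 | hβ1
  · nlinarith
  set s := √(β * γ)
  set u := √(γ / β)
  have hs : 1 < s := by rw [lt_sqrt zero_le_one]; simpa using h1
  have hu : 1 ≤ u := one_le_sqrt.2 ((one_le_div hβ).2 hle)
  have hβu : s / u = β := by
    rw [← sqrt_div (by positivity), show β * γ / (γ / β) = β ^ 2 by field_simp, sqrt_sq hβ.le]
  have hγu : s * u = γ := by
    rw [← sqrt_mul (by positivity), show β * γ * (γ / β) = γ ^ 2 by field_simp,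
      sqrt_sq (by linarith)]
  have hcrit := div_sub_one_mul_sq_rpow_le hu hs
  rw [hβu, hγu, sq_sqrt (by positivity)] at hcrit
  linarith [mul_le_mul_of_nonneg_left hxc (sub_nonneg.2 hβ1.le)]

theorem stmt_0 (β γ x : ℝ) (hβ : 0 < β) (hγ : 0 < γ) (h1 : 1 < β * γ) (hle : β ≤ γ)
    (hx : 0 < x)
    (hxc : x ≤ (γ / β) ^ (Real.sqrt (β * γ) / (Real.sqrt (β * γ) - 1))) :
    (β * x + 1) / (x + γ) ≤ 1 :=
  stmt_0_general β γ x hβ h1 hle hx hxc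
end

section
/- If β > 1, γ ≥ β, and βγ > 1, then (γ−1)/(β−1) ≥ (γ/β)^(√(βγ)/(√(βγ)−1)). -/
/-!
Put `m = √(βγ)`, so that `β = m² / γ` and `γ / β = (γ / m)²`; the claim becomes
`(t / m) ^ (2m / (m - 1)) ≤ t (t - 1) / (m² - t)` at `t = γ ∈ [m, m²)`. Both sides agree at
`t = m`, and in logarithmic form their difference
`log (t - 1) - log (m² - t) - (m + 1) / (m - 1) * log t` has derivative
`(m + 1) (t - m)² / ((m - 1) t (t - 1) (m² - t)) ≥ 0`.
-/

open Real Set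

namespace CriticalField

variable {m : ℝ}

noncomputable def gap (m t : ℝ) : ℝ :=
  log (t - 1) - log (m ^ 2 - t) - (m + 1) / (m - 1) * log t

lemma hasDerivAt_gap (hm : 1 < m) {t : ℝ} (ht : 1 < t) (htm : t < m ^ 2) :
    HasDerivAt (gap m) ((m + 1) * (t - m) ^ 2 / ((m - 1) * t * (t - 1) * (m ^ 2 - t))) t := by
  have hlog_sub_one : HasDerivAt (fun t => log (t - 1)) (1 / (t - 1)) t := by
    simpa using ((hasDerivAt_id t).sub_const 1).log (by simp; linarith)
  have hlog_sq_sub : HasDerivAt (fun t => log (m ^ 2 - t)) (-1 / (m ^ 2 - t)) t := by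
    simpa using ((hasDerivAt_id t).const_sub (m ^ 2)).log (by simp; linarith)
  have hlog : HasDerivAt (fun t => (m + 1) / (m - 1) * log t) ((m + 1) / (m - 1) * t⁻¹) t :=
    (hasDerivAt_log (by linarith)).const_mul _
  refine ((hlog_sub_one.sub hlog_sq_sub).sub hlog).congr_deriv ?_
  have : t - 1 ≠ 0 := by linarith
  have : m ^ 2 - t ≠ 0 := by linarith
  have : m - 1 ≠ 0 := by linarith
  have : t ≠ 0 := by linarith
  field_simp
  ring

lemma monotoneOn_gap (hm : 1 < m) : MonotoneOn (gap m) (Ico m (m ^ 2)) := by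
  have hderiv : ∀ t ∈ Ico m (m ^ 2), HasDerivAt (gap m)
      ((m + 1) * (t - m) ^ 2 / ((m - 1) * t * (t - 1) * (m ^ 2 - t))) t :=
    fun t ⟨hmt, htm⟩ => hasDerivAt_gap hm (hm.trans_le hmt) htm
  refine monotoneOn_of_hasDerivWithinAt_nonneg (convex_Ico _ _)
    (fun t ht => (hderiv t ht).continuousAt.continuousWithinAt)
    (fun t ht => (hderiv t (interior_subset ht)).hasDerivWithinAt) fun t ht => ?_
  obtain ⟨hmt, htm⟩ := interior_subset ht
  have : 0 < m ^ 2 - t := by linarith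
  have : 0 < t - 1 := by linarith
  have : 0 < m - 1 := by linarith
  have : 0 < t := by linarith
  positivity

lemma div_rpow_le_mul_sub_one_div (hm : 1 < m) {t : ℝ} (ht : t ∈ Ico m (m ^ 2)) :
    (t / m) ^ (2 * m / (m - 1)) ≤ t * (t - 1) / (m ^ 2 - t) := by
  obtain ⟨hmt, htm⟩ := ht
  have hm0 : 0 < m := by linarith
  have ht0 : 0 < t := by linarith
  have hgap := monotoneOn_gap hm ⟨le_rfl, by nlinarith⟩ ⟨hmt, htm⟩ hmt
  have hm_sq_sub : m ^ 2 - m = m * (m - 1) := by ring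
  simp only [gap, hm_sq_sub] at hgap
  rw [log_mul hm0.ne' (by linarith)] at hgap
  rw [← log_le_log_iff (by positivity) (by apply div_pos <;> nlinarith), log_rpow (by positivity),
    log_div (by positivity) (by linarith), log_div (by nlinarith) (by linarith),
    log_mul ht0.ne' (by linarith)]
  have : 2 * m / (m - 1) = 1 + (m + 1) / (m - 1) := by
    have : m - 1 ≠ 0 := by linarith
    field_simp
    ring
  rw [this]
  linear_combination hgap

end CriticalField

open CriticalField in
theorem stmt_1 (β γ : ℝ) (hβ : 1 < β) (hle : β ≤ γ) (h1 : 1 < β * γ) :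
    (γ / β) ^ (Real.sqrt (β * γ) / (Real.sqrt (β * γ) - 1)) ≤ (γ - 1) / (β - 1) := by
  set m := √(β * γ)
  have hβγ : m ^ 2 = β * γ := sq_sqrt (by linarith)
  have hm : 1 < m := (lt_sqrt zero_le_one).2 (by simpa using h1)
  have hmγ : m ≤ γ := by nlinarith
  have hγm : γ < m ^ 2 := by nlinarith
  have hratio : γ / β = (γ / m) ^ 2 := by
    rw [div_pow, hβγ]
    field_simp
  have hrhs : γ * (γ - 1) / (m ^ 2 - γ) = (γ - 1) / (β - 1) := by
    rw [hβγ, div_eq_div_iff (by nlinarith) (by linarith)]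
    ring
  calc (γ / β) ^ (m / (m - 1))
      = (γ / m) ^ (2 * m / (m - 1)) := by
        rw [hratio, ← rpow_natCast_mul (div_nonneg (by linarith) (by linarith)), mul_div_assoc,
          Nat.cast_ofNat]
    _ ≤ γ * (γ - 1) / (m ^ 2 - γ) := div_rpow_le_mul_sub_one_div hm ⟨hmγ, hγm⟩
    _ = (γ - 1) / (β - 1) := hrhs
end

section
/- Writing γ = k²β with k ≥ 1 and β > 1, the function r(k) = log(βk² − 1) − log(β − 1) − (2βk/(βk − 1))·log k is nonnegative for all k ≥ 1. -/
/-!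
With `v = (βk² - 1) / ((β - 1)k²) ≥ 1`, `log (βk² - 1) - log (β - 1) = log v + 2 log k`.
The bound `log v ≥ 2(v - 1)/(v + 1) = 2(k² - 1)/((2β - 1)k² - 1)` and
`log k ≤ sinh (log k) = (k² - 1)/(2k)` reduce the claim to `(2β - 1)k² - 1 ≤ 2k(βk - 1)`,
which is `(k - 1)² ≥ 0`.
-/

open Real

lemma Real.log_le_half_sub_inv {x : ℝ} (hx : 1 ≤ x) : log x ≤ (x - x⁻¹) / 2 := by
  rw [← sinh_log (by linarith)]
  exact self_le_sinh_iff.2 (log_nonneg hx)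

lemma Real.two_mul_sub_one_div_add_one_le_log {x : ℝ} (hx : 1 ≤ x) :
    2 * (x - 1) / (x + 1) ≤ log x := by
  simpa [show x - 1 + 2 = x + 1 by ring] using le_log_one_add_of_nonneg (sub_nonneg.2 hx)

lemma two_mul_log_add_le_log_sub_log {β k : ℝ} (hβ : 1 < β) (hk : 1 ≤ k) :
    2 * log k + 2 * (k ^ 2 - 1) / ((2 * β - 1) * k ^ 2 - 1) ≤ log (β * k ^ 2 - 1) - log (β - 1) := by
  have hb : 0 < β - 1 := by linarith
  have hk2 : 0 < k ^ 2 := by positivity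
  have hM : 0 < (β - 1) * k ^ 2 := by positivity
  have hN : 0 < β * k ^ 2 - 1 := by nlinarith
  set v := (β * k ^ 2 - 1) / ((β - 1) * k ^ 2)
  have hv : 1 ≤ v := by rw [le_div_iff₀ hM]; nlinarith
  have hlog : log (β * k ^ 2 - 1) - log (β - 1) = log v + 2 * log k := by
    rw [log_div hN.ne' hM.ne', log_mul hb.ne' hk2.ne', log_pow]
    push_cast
    ring
  have hfrac : 2 * (v - 1) / (v + 1) = 2 * (k ^ 2 - 1) / ((2 * β - 1) * k ^ 2 - 1) := by
    rw [div_eq_div_iff (by linarith) (by nlinarith)]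
    simp only [v]
    field_simp
    ring
  have := two_mul_sub_one_div_add_one_le_log hv
  linarith

theorem stmt_2 (β k : ℝ) (hβ : 1 < β) (hk : 1 ≤ k) :
    0 ≤ Real.log (β * k ^ 2 - 1) - Real.log (β - 1) - (2 * β * k / (β * k - 1)) * Real.log k := by
  have hE : 0 < β * k - 1 := by nlinarith
  have hD : 0 < (2 * β - 1) * k ^ 2 - 1 := by nlinarith
  have hkey : log k / (β * k - 1) ≤ (k ^ 2 - 1) / ((2 * β - 1) * k ^ 2 - 1) := by
    rw [div_le_div_iff₀ hE hD]
    calc log k * ((2 * β - 1) * k ^ 2 - 1)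
        ≤ (k - k⁻¹) / 2 * ((2 * β - 1) * k ^ 2 - 1) := by gcongr; exact log_le_half_sub_inv hk
      _ = (k ^ 2 - 1) * (2 * k * (β * k - 1) - (k - 1) ^ 2) / (2 * k) := by field_simp; ring
      _ ≤ (k ^ 2 - 1) * (β * k - 1) := by
        rw [div_le_iff₀ (by positivity)]
        linarith [mul_nonneg (sub_nonneg.2 (one_le_pow₀ hk : (1 : ℝ) ≤ k ^ 2)) (sq_nonneg (k - 1))]
  refine sub_nonneg.2 ?_
  calc 2 * β * k / (β * k - 1) * log k
      = 2 * log k + 2 * (log k / (β * k - 1)) := by field_simp; ring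
    _ ≤ 2 * log k + 2 * (k ^ 2 - 1) / ((2 * β - 1) * k ^ 2 - 1) := by rw [mul_div_assoc]; gcongr
    _ ≤ log (β * k ^ 2 - 1) - log (β - 1) := two_mul_log_add_le_log_sub_log hβ hk
end

section
/- Let βγ > 1, β ≤ γ, and λ_c = (γ/β)^(√(βγ)/(√(βγ)−1)). Then for every x with 0 < x ≤ λ_c, (βγ − 1)·x·log(λ_c/x) ≤ (βx + 1)(x + γ)·log((x + γ)/(βx + 1)). -/
/-!
With `s = √(βγ)` and `a = √(γ/β)` we have `β = s / a` and `γ = a s`; substituting `x = a y` and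
dividing by `a`, the inequality becomes
`(s+1)² y log a - (s²-1) y log y ≤ (sy+1)(y+s) (log a + log ((y+s)/(sy+1)))`,
and `x ≤ λ_c` becomes `(s-1) log y ≤ (s+1) log a`. As `(sy+1)(y+s) - (s+1)² y = s (y-1)² ≥ 0`:

* for `y ≤ 1` it suffices that `(sy+1)(y+s) log ((y+s)/(sy+1)) + (s²-1) y log y ≥ 0`, true since
  this function vanishes at `1` and its derivative is nonpositive on `(0, 1]`, being itself
  increasing there and zero at `1`;
* for `y ≥ 1`, the bound `(s+1) log ((sy+1)/(y+s)) ≤ (s-1) log y` (the difference has derivative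
  `(s-1) s (y-1)² / (y (sy+1) (y+s))`) reduces the claim to the constraint on `y`.
-/

open Real Set

lemma monotoneOn_of_hasDerivAt_nonneg {D : Set ℝ} (hD : Convex ℝ D) {f f' : ℝ → ℝ}
    (hf : ∀ x ∈ D, HasDerivAt f (f' x) x) (hf'₀ : ∀ x ∈ interior D, 0 ≤ f' x) :
    MonotoneOn f D :=
  monotoneOn_of_hasDerivWithinAt_nonneg hD (fun x hx ↦ (hf x hx).continuousAt.continuousWithinAt)
    (fun x hx ↦ (hf x (interior_subset hx)).hasDerivWithinAt) hf'₀

lemma antitoneOn_of_hasDerivAt_nonpos {D : Set ℝ} (hD : Convex ℝ D) {f f' : ℝ → ℝ}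
    (hf : ∀ x ∈ D, HasDerivAt f (f' x) x) (hf'₀ : ∀ x ∈ interior D, f' x ≤ 0) :
    AntitoneOn f D :=
  antitoneOn_of_hasDerivWithinAt_nonpos hD (fun x hx ↦ (hf x hx).continuousAt.continuousWithinAt)
    (fun x hx ↦ (hf x (interior_subset hx)).hasDerivWithinAt) hf'₀

noncomputable def logRatio (s t : ℝ) : ℝ := log (t + s) - log (s * t + 1)

section logRatio

variable {s t : ℝ}

lemma logRatio_one : logRatio s 1 = 0 := by
  simp [logRatio, add_comm]

lemma hasDerivAt_logRatio (hs : 0 ≤ s) (ht : 0 < t) :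
    HasDerivAt (logRatio s) (1 / (t + s) - s / (s * t + 1)) t := by
  have hadd : HasDerivAt (fun u ↦ u + s) 1 t := (hasDerivAt_id t).add_const s
  have hmul : HasDerivAt (fun u ↦ s * u + 1) s t := by
    simpa using ((hasDerivAt_id t).const_mul s).add_const 1
  exact (hadd.log (by positivity)).sub (hmul.log (by positivity))

lemma logRatio_nonneg (hs : 1 ≤ s) (ht : 0 < t) (ht1 : t ≤ 1) : 0 ≤ logRatio s t :=
  sub_nonneg.2 <| log_le_log (by positivity) (by nlinarith)

lemma one_sub_mul_log_le_mul_logRatio (hs : 1 ≤ s) (ht : 1 ≤ t) :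
    (1 - s) * log t ≤ (s + 1) * logRatio s t := by
  have hderiv : ∀ u ∈ Ici (1 : ℝ), HasDerivAt (fun u ↦ (s + 1) * logRatio s u - (1 - s) * log u)
      ((s - 1) * s * (u - 1) ^ 2 / (u * ((s * u + 1) * (u + s)))) u := by
    intro u hu
    have hu : (0 : ℝ) < u := by rw [mem_Ici] at hu; linarith
    refine (((hasDerivAt_logRatio (s := s) (by linarith) hu).const_mul (s + 1)).sub
      ((hasDerivAt_log hu.ne').const_mul (1 - s))).congr_deriv ?_
    field_simp
    ring
  have hmono := monotoneOn_of_hasDerivAt_nonneg (convex_Ici 1) hderiv fun u hu ↦ by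
    rw [interior_Ici, mem_Ioi] at hu
    have : 0 ≤ s - 1 := by linarith
    have : 0 < u := by linarith
    positivity
  have := hmono self_mem_Ici ht ht
  simp only [logRatio_one, log_one] at this
  linarith

/-- The derivative of the function in `mul_logRatio_add_mul_log_nonneg`. -/
lemma mul_logRatio_add_mul_log_nonpos (hs : 1 ≤ s) (ht : 0 < t) (ht1 : t ≤ 1) :
    (2 * s * t + s ^ 2 + 1) * logRatio s t + (s ^ 2 - 1) * log t ≤ 0 := by
  have hderiv : ∀ u ∈ Ioc (0 : ℝ) 1,
      HasDerivAt (fun u ↦ (2 * s * u + s ^ 2 + 1) * logRatio s u + (s ^ 2 - 1) * log u)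
        (2 * s * logRatio s u + s * (s ^ 2 - 1) * (1 - u ^ 2) / (u * ((s * u + 1) * (u + s)))) u := by
    intro u hu
    have hu0 : 0 < u := hu.1
    have hlin : HasDerivAt (fun u ↦ 2 * s * u + s ^ 2 + 1) (2 * s) u := by
      simpa using ((hasDerivAt_id u).const_mul (2 * s)).add_const (s ^ 2 + 1)
    refine ((hlin.mul (hasDerivAt_logRatio (by linarith) hu0)).add
      ((hasDerivAt_log hu0.ne').const_mul (s ^ 2 - 1))).congr_deriv ?_
    field_simp
    ring
  have hmono := monotoneOn_of_hasDerivAt_nonneg (convex_Ioc 0 1) hderiv fun u hu ↦ by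
    rw [interior_Ioc, mem_Ioo] at hu
    have := logRatio_nonneg hs hu.1 hu.2.le
    have : 0 ≤ s ^ 2 - 1 := by nlinarith
    have : 0 ≤ 1 - u ^ 2 := by nlinarith
    have : 0 < u := hu.1
    positivity
  have := hmono ⟨ht, ht1⟩ (right_mem_Ioc.2 one_pos) ht1
  simpa [logRatio_one] using this

lemma mul_logRatio_add_mul_log_nonneg (hs : 1 ≤ s) (ht : 0 < t) (ht1 : t ≤ 1) :
    0 ≤ (s * t + 1) * (t + s) * logRatio s t + (s ^ 2 - 1) * (t * log t) := by
  have hderiv : ∀ u ∈ Ioc (0 : ℝ) 1,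
      HasDerivAt (fun u ↦ (s * u + 1) * (u + s) * logRatio s u + (s ^ 2 - 1) * (u * log u))
        ((2 * s * u + s ^ 2 + 1) * logRatio s u + (s ^ 2 - 1) * log u) u := by
    intro u hu
    have hquad : HasDerivAt (fun u ↦ (s * u + 1) * (u + s)) (2 * s * u + s ^ 2 + 1) u := by
      refine ((((hasDerivAt_id u).const_mul s).add_const 1).mul
        ((hasDerivAt_id u).add_const s)).congr_deriv ?_
      simp only [id]
      ring
    have hu0 : 0 < u := hu.1
    refine ((hquad.mul (hasDerivAt_logRatio (by linarith) hu0)).add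
      ((hasDerivAt_mul_log hu0.ne').const_mul (s ^ 2 - 1))).congr_deriv ?_
    field_simp
    ring
  have hanti := antitoneOn_of_hasDerivAt_nonpos (convex_Ioc 0 1) hderiv fun u hu ↦ by
    rw [interior_Ioc] at hu
    exact mul_logRatio_add_mul_log_nonpos hs hu.1 hu.2.le
  have := hanti ⟨ht, ht1⟩ (right_mem_Ioc.2 one_pos) ht1
  simpa [logRatio_one] using this

end logRatio

lemma mul_sub_mul_log_le_mul_add_logRatio {s b y : ℝ} (hs : 1 < s) (hb : 0 ≤ b) (hy : 0 < y)
    (hyb : (s - 1) * log y ≤ (s + 1) * b) :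
    (s + 1) ^ 2 * y * b - (s ^ 2 - 1) * (y * log y) ≤
      (s * y + 1) * (y + s) * (b + logRatio s y) := by
  have hP : (s + 1) ^ 2 * y ≤ (s * y + 1) * (y + s) := by nlinarith [sq_nonneg (y - 1)]
  rcases le_total y 1 with hy1 | hy1
  · nlinarith [mul_le_mul_of_nonneg_right hP hb, mul_logRatio_add_mul_log_nonneg hs.le hy hy1]
  · have hD : 0 ≤ (s + 1) * b - (s - 1) * log y := by linarith
    have hK := one_sub_mul_log_le_mul_logRatio hs.le hy1
    refine le_of_mul_le_mul_left ?_ (by linarith : (0 : ℝ) < s + 1)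
    calc (s + 1) * ((s + 1) ^ 2 * y * b - (s ^ 2 - 1) * (y * log y))
        = (s + 1) ^ 2 * y * ((s + 1) * b - (s - 1) * log y) := by ring
      _ ≤ (s * y + 1) * (y + s) * ((s + 1) * b - (s - 1) * log y) :=
        mul_le_mul_of_nonneg_right hP hD
      _ ≤ (s * y + 1) * (y + s) * ((s + 1) * b + (s + 1) * logRatio s y) := by
        gcongr; linarith
      _ = (s + 1) * ((s * y + 1) * (y + s) * (b + logRatio s y)) := by ring

theorem stmt_4 (β γ x : ℝ) (hβ : 0 < β) (hγ : 0 < γ) (h1 : 1 < β * γ) (hle : β ≤ γ)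
    (hx : 0 < x)
    (hxc : x ≤ (γ / β) ^ (Real.sqrt (β * γ) / (Real.sqrt (β * γ) - 1))) :
    (β * γ - 1) * x *
        Real.log ((γ / β) ^ (Real.sqrt (β * γ) / (Real.sqrt (β * γ) - 1)) / x) ≤
      (β * x + 1) * (x + γ) * Real.log ((x + γ) / (β * x + 1)) := by
  set s := √(β * γ)
  set a := √(γ / β)
  set c := (γ / β) ^ (s / (s - 1))
  have hs : 1 < s := lt_sqrt zero_le_one |>.2 (by simpa using h1)
  have hsq : s ^ 2 = β * γ := sq_sqrt (by positivity)
  have ha0 : 0 < a := sqrt_pos.2 (by positivity)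
  have ha1 : 1 ≤ a := one_le_sqrt.2 ((one_le_div hβ).2 hle)
  have hβa : β * a = s := by
    rw [← sqrt_sq hβ.le, ← sqrt_mul (sq_nonneg β)]
    congr 1
    field_simp
  have haγ : a * s = γ := by
    rw [← sqrt_mul (by positivity), show γ / β * (β * γ) = γ ^ 2 by field_simp, sqrt_sq hγ.le]
  have hc : (s - 1) * log c = 2 * s * log a := by
    rw [log_rpow (by positivity), log_sqrt (by positivity)]
    field_simp [(sub_pos.2 hs).ne']
  obtain ⟨y, rfl⟩ : ∃ y, x = a * y := ⟨x / a, by field_simp⟩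
  have hy : 0 < y := pos_of_mul_pos_right hx ha0.le
  have hlogx : log (a * y) = log a + log y := log_mul ha0.ne' hy.ne'
  have hyc : (s - 1) * log y ≤ (s + 1) * log a := by
    have := mul_le_mul_of_nonneg_left (log_le_log hx hxc) (sub_pos.2 hs).le
    rw [hlogx] at this
    linear_combination this + hc
  have key := mul_sub_mul_log_le_mul_add_logRatio hs (log_nonneg ha1) hy hyc
  have hβx : β * (a * y) + 1 = s * y + 1 := by rw [← hβa]; ring
  have hxγ : a * y + γ = a * (y + s) := by rw [← haγ]; ring
  rw [log_div (by positivity) hx.ne', log_div (by positivity) (by positivity), hlogx, hβx, hxγ,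
    log_mul ha0.ne' (by positivity), ← hsq]
  calc (s ^ 2 - 1) * (a * y) * (log c - (log a + log y))
      = a * ((s + 1) ^ 2 * y * log a - (s ^ 2 - 1) * (y * log y)) := by
        linear_combination (s + 1) * (a * y) * hc
    _ ≤ a * ((s * y + 1) * (y + s) * (log a + logRatio s y)) := by gcongr
    _ = (s * y + 1) * (a * (y + s)) * (log a + log (y + s) - log (s * y + 1)) := by
        rw [logRatio]; ring
end

section
/- For βγ > 1, β ≤ γ, the function h(x) = ((√(βγ)−1)/(√(βγ)+1))·log(λ_c/x) − log((x+γ)/(βx+1)) is nonincreasing on (0, ∞), vanishes at x = √(γ/β), and hence is negative for x > √(γ/β). -/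
/-!
Put `r = √(γ / β)`, so that `γ = β r²` and `√(βγ) = β r`. Then the derivative of `h` simplifies
to `-(√(βγ) - 1) β (x - r)² / ((√(βγ) + 1) x (x + γ) (β x + 1))`, which is `≤ 0` on `(0, ∞)` and
`< 0` for `x > r`. At `x = r` one has `(r + γ) / (β r + 1) = r` and
`log λ_c = 2 √(βγ) / (√(βγ) - 1) · log r`, and these make `h r` vanish.
-/

open Real Set

/-- The function `h` of the statement, with `λ_c` written out. -/
noncomputable def criticalGap (β γ x : ℝ) : ℝ :=
  (√(β * γ) - 1) / (√(β * γ) + 1) * log ((γ / β) ^ (√(β * γ) / (√(β * γ) - 1)) / x) -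
    log ((x + γ) / (β * x + 1))

lemma sqrt_mul_eq_mul_sqrt_div {β : ℝ} (hβ : 0 < β) (γ : ℝ) : √(β * γ) = β * √(γ / β) := by
  rw [← sqrt_sq hβ.le, ← sqrt_mul (sq_nonneg β), sqrt_sq hβ.le]
  congr 1
  field_simp

lemma mul_sqrt_div_sq {β γ : ℝ} (hβ : 0 < β) (hγ : 0 ≤ γ) : β * √(γ / β) ^ 2 = γ := by
  rw [sq_sqrt (div_nonneg hγ hβ.le)]
  field_simp

lemma hasDerivAt_criticalGap {β γ x : ℝ} (hβ : 0 < β) (hγ : 0 < γ) (hx : 0 < x) :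
    HasDerivAt (criticalGap β γ)
      (-((√(β * γ) - 1) * β * (x - √(γ / β)) ^ 2) /
        ((√(β * γ) + 1) * x * (x + γ) * (β * x + 1))) x := by
  set L := (γ / β) ^ (√(β * γ) / (√(β * γ) - 1))
  have hL : 0 < L := rpow_pos_of_pos (div_pos hγ hβ) _
  have hlin : HasDerivAt (fun y => β * y + 1) β x := by
    simpa using ((hasDerivAt_id x).const_mul β).add_const 1
  have hquot : HasDerivAt (fun y => (y + γ) / (β * y + 1))
      ((1 * (β * x + 1) - (x + γ) * β) / (β * x + 1) ^ 2) x :=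
    ((hasDerivAt_id x).add_const γ).div hlin (by positivity)
  have hinv : HasDerivAt (fun y => L / y) ((0 * x - L * 1) / x ^ 2) x :=
    (hasDerivAt_const x L).div (hasDerivAt_id x) hx.ne'
  refine HasDerivAt.congr_deriv (f := criticalGap β γ)
    (((hinv.log (by positivity)).const_mul _).sub (hquot.log (by positivity))) ?_
  have hr2 := mul_sqrt_div_sq hβ hγ.le
  rw [sqrt_mul_eq_mul_sqrt_div hβ γ]
  have hr := sqrt_nonneg (γ / β)
  generalize √(γ / β) = r at hr hr2 ⊢
  subst hr2
  field_simp
  ring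

lemma criticalGap_sqrt_div {β γ : ℝ} (hβ : 0 < β) (hγ : 0 < γ) (h1 : 1 < β * γ) :
    criticalGap β γ √(γ / β) = 0 := by
  have hr : 0 < γ / β := div_pos hγ hβ
  have hs : 1 < √(β * γ) := lt_sqrt_of_sq_lt (by rwa [one_pow])
  have hfix : (√(γ / β) + γ) / (β * √(γ / β) + 1) = √(γ / β) := by
    rw [div_eq_iff (by positivity)]
    linear_combination -mul_sqrt_div_sq hβ hγ.le
  rw [criticalGap, hfix, log_div (rpow_pos_of_pos hr _).ne' (sqrt_pos.2 hr).ne', log_rpow hr,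
    log_sqrt hr.le]
  have : √(β * γ) - 1 ≠ 0 := by linarith
  field_simp
  ring

lemma antitoneOn_criticalGap {β γ : ℝ} (hβ : 0 < β) (hγ : 0 < γ) (h1 : 1 < β * γ) :
    AntitoneOn (criticalGap β γ) (Ioi 0) := by
  have hs : 1 < √(β * γ) := lt_sqrt_of_sq_lt (by rwa [one_pow])
  refine antitoneOn_of_deriv_nonpos (convex_Ioi 0)
    (fun x hx => (hasDerivAt_criticalGap hβ hγ hx).continuousAt.continuousWithinAt)
    (fun x hx => ?_) (fun x hx => ?_) <;> rw [interior_Ioi, mem_Ioi] at hx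
  · exact (hasDerivAt_criticalGap hβ hγ hx).differentiableAt.differentiableWithinAt
  · rw [(hasDerivAt_criticalGap hβ hγ hx).deriv]
    refine div_nonpos_of_nonpos_of_nonneg ?_ (by positivity)
    have : 0 ≤ (√(β * γ) - 1) * β * (x - √(γ / β)) ^ 2 := by
      have := sub_pos.2 hs
      positivity
    linarith

lemma strictAntiOn_criticalGap {β γ : ℝ} (hβ : 0 < β) (hγ : 0 < γ) (h1 : 1 < β * γ) :
    StrictAntiOn (criticalGap β γ) (Ici √(γ / β)) := by
  have hs : 1 < √(β * γ) := lt_sqrt_of_sq_lt (by rwa [one_pow])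
  have hr : 0 < √(γ / β) := sqrt_pos.2 (div_pos hγ hβ)
  refine strictAntiOn_of_deriv_neg (convex_Ici _) (fun x hx => ?_) (fun x hx => ?_)
  · exact (hasDerivAt_criticalGap hβ hγ (hr.trans_le hx)).continuousAt.continuousWithinAt
  · rw [interior_Ici] at hx
    have hx0 : 0 < x := hr.trans hx
    rw [(hasDerivAt_criticalGap hβ hγ hx0).deriv]
    refine div_neg_of_neg_of_pos ?_ (by positivity)
    have : 0 < (√(β * γ) - 1) * β * (x - √(γ / β)) ^ 2 := by
      have := sub_pos.2 hs
      have := sub_pos.2 (mem_Ioi.1 hx)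
      positivity
    linarith

theorem stmt_5_general (β γ : ℝ) (hβ : 0 < β) (hγ : 0 < γ) (h1 : 1 < β * γ) :
    AntitoneOn
      (fun x : ℝ =>
        (Real.sqrt (β * γ) - 1) / (Real.sqrt (β * γ) + 1) *
            Real.log ((γ / β) ^ (Real.sqrt (β * γ) / (Real.sqrt (β * γ) - 1)) / x) -
          Real.log ((x + γ) / (β * x + 1)))
      (Set.Ioi 0) ∧
    ((Real.sqrt (β * γ) - 1) / (Real.sqrt (β * γ) + 1) *
            Real.log ((γ / β) ^ (Real.sqrt (β * γ) / (Real.sqrt (β * γ) - 1)) /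
              Real.sqrt (γ / β)) -
          Real.log ((Real.sqrt (γ / β) + γ) / (β * Real.sqrt (γ / β) + 1)) = 0) ∧
    ∀ x : ℝ, Real.sqrt (γ / β) < x →
      (Real.sqrt (β * γ) - 1) / (Real.sqrt (β * γ) + 1) *
            Real.log ((γ / β) ^ (Real.sqrt (β * γ) / (Real.sqrt (β * γ) - 1)) / x) -
          Real.log ((x + γ) / (β * x + 1)) < 0 := by
  refine ⟨antitoneOn_criticalGap hβ hγ h1, criticalGap_sqrt_div hβ hγ h1, fun x hx => ?_⟩
  rw [← criticalGap_sqrt_div hβ hγ h1]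
  exact strictAntiOn_criticalGap hβ hγ h1 self_mem_Ici hx.le hx

theorem stmt_5 (β γ : ℝ) (hβ : 0 < β) (hγ : 0 < γ) (h1 : 1 < β * γ) (hle : β ≤ γ) :
    AntitoneOn
      (fun x : ℝ =>
        (Real.sqrt (β * γ) - 1) / (Real.sqrt (β * γ) + 1) *
            Real.log ((γ / β) ^ (Real.sqrt (β * γ) / (Real.sqrt (β * γ) - 1)) / x) -
          Real.log ((x + γ) / (β * x + 1)))
      (Set.Ioi 0) ∧
    ((Real.sqrt (β * γ) - 1) / (Real.sqrt (β * γ) + 1) *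
            Real.log ((γ / β) ^ (Real.sqrt (β * γ) / (Real.sqrt (β * γ) - 1)) /
              Real.sqrt (γ / β)) -
          Real.log ((Real.sqrt (γ / β) + γ) / (β * Real.sqrt (γ / β) + 1)) = 0) ∧
    ∀ x : ℝ, Real.sqrt (γ / β) < x →
      (Real.sqrt (β * γ) - 1) / (Real.sqrt (β * γ) + 1) *
            Real.log ((γ / β) ^ (Real.sqrt (β * γ) / (Real.sqrt (β * γ) - 1)) / x) -
          Real.log ((x + γ) / (β * x + 1)) < 0 :=
  stmt_5_general β γ hβ hγ h1
end

section
/- For any positive reals β, γ with βγ > 1 and any x > 0, (βγ − 1)x / ((γx + 1)(x + β)) ≤ (√(βγ) − 1)/(√(βγ) + 1). -/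
lemma two_mul_sqrt_mul_mul_le_mul_sq_add {β γ : ℝ} (hβ : 0 ≤ β) (hγ : 0 ≤ γ) (x : ℝ) :
    2 * Real.sqrt (β * γ) * x ≤ γ * x ^ 2 + β := by
  rw [Real.sqrt_mul hβ]
  linear_combination sq_nonneg (Real.sqrt γ * x - Real.sqrt β) + x ^ 2 * Real.sq_sqrt hγ
    + Real.sq_sqrt hβ

theorem stmt_6 (β γ x : ℝ) (hβ : 0 < β) (hγ : 0 < γ) (h1 : 1 < β * γ) (hx : 0 < x) :
    (β * γ - 1) * x / ((γ * x + 1) * (x + β)) ≤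
      (Real.sqrt (β * γ) - 1) / (Real.sqrt (β * γ) + 1) := by
  have amgm := two_mul_sqrt_mul_mul_le_mul_sq_add hβ.le hγ.le x
  set s := Real.sqrt (β * γ)
  have hs : s ^ 2 = β * γ := Real.sq_sqrt (by positivity)
  have hs1 : 1 < s := Real.lt_sqrt_of_sq_lt (by simpa using h1)
  rw [div_le_div_iff₀ (by positivity) (by positivity)]
  -- with `β * γ = s ^ 2`, the difference of the two sides is `(s - 1) * (γ * x ^ 2 + β - 2 * s * x)`
  linear_combination (s - 1) * amgm - 2 * x * hs
end

section
/- Let βγ > 1 and let d < Δ_c = (√(βγ)+1)/(√(βγ)−1) be a positive real. Then for every x > 0, (βx + 1)(x + γ) > d(βγ − 1)x. Consequently, for f_d(x) = λ((βx+1)/(x+γ))^d with any λ > 0, every fixed point x̂ of f_d satisfies f_d'(x̂) < 1. -/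
/-!
Write `s = √(βγ)`. By AM-GM, `βx² + γ ≥ 2sx`, so `(βx + 1)(x + γ) ≥ (s + 1)²x`, while
`d < (s + 1)/(s - 1)` gives `d(βγ - 1) = d(s - 1)(s + 1) < (s + 1)²`. At a fixed point `x̂ = f_d(x̂)`
the derivative of `f_d` is `d(βγ - 1)x̂ / ((βx̂ + 1)(x̂ + γ))`, which is therefore below `1`.
-/

open Real

theorem sqrt_mul_add_one_sq_mul_le {β γ x : ℝ} (hβ : 0 ≤ β) (hγ : 0 ≤ γ) (hx : 0 ≤ x) :
    (√(β * γ) + 1) ^ 2 * x ≤ (β * x + 1) * (x + γ) := by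
  have hs : √(β * γ) ^ 2 = β * γ := sq_sqrt (mul_nonneg hβ hγ)
  have amgm : 2 * √(β * γ) * x ≤ β * x ^ 2 + γ := by
    have := two_mul_le_add_sq (√β * x) √γ
    rw [mul_pow, sq_sqrt hβ, sq_sqrt hγ] at this
    rw [sqrt_mul hβ]
    linarith
  nlinarith

theorem mul_sub_one_lt_sqrt_add_one_sq {β γ d : ℝ} (h1 : 1 < β * γ)
    (hdc : d < (√(β * γ) + 1) / (√(β * γ) - 1)) :
    d * (β * γ - 1) < (√(β * γ) + 1) ^ 2 := by
  have hs : √(β * γ) ^ 2 = β * γ := sq_sqrt (by linarith)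
  have hs1 : 1 < √(β * γ) := by nlinarith [sqrt_nonneg (β * γ)]
  have hd : d * (√(β * γ) - 1) < √(β * γ) + 1 := (lt_div_iff₀ (by linarith)).mp hdc
  calc d * (β * γ - 1) = d * (√(β * γ) - 1) * (√(β * γ) + 1) := by linear_combination (-d) * hs
    _ < (√(β * γ) + 1) * (√(β * γ) + 1) := by gcongr
    _ = (√(β * γ) + 1) ^ 2 := by ring

theorem hasDerivAt_mul_div_rpow {l β γ d x : ℝ} (hnum : β * x + 1 ≠ 0) (hden : x + γ ≠ 0) :
    HasDerivAt (fun x : ℝ => l * ((β * x + 1) / (x + γ)) ^ d)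
      (d * (β * γ - 1) * (l * ((β * x + 1) / (x + γ)) ^ d) / ((β * x + 1) * (x + γ))) x := by
  have hquot : HasDerivAt (fun x : ℝ => (β * x + 1) / (x + γ))
      ((β * (x + γ) - (β * x + 1) * 1) / (x + γ) ^ 2) x :=
    (((hasDerivAt_id x).const_mul β).add_const 1).div ((hasDerivAt_id x).add_const γ) hden
      |>.congr_deriv (by simp)
  have hu : (β * x + 1) / (x + γ) ≠ 0 := div_ne_zero hnum hden
  refine (((hasDerivAt_rpow_const (Or.inl hu)).comp x hquot).const_mul l).congr_deriv ?_
  rw [rpow_sub_one hu]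
  field_simp
  ring

theorem stmt_7_general (β γ d : ℝ) (hβ : 0 < β) (hγ : 0 < γ) (h1 : 1 < β * γ)
    (hdc : d < (Real.sqrt (β * γ) + 1) / (Real.sqrt (β * γ) - 1)) :
    (∀ x : ℝ, 0 < x → d * (β * γ - 1) * x < (β * x + 1) * (x + γ)) ∧
    ∀ l : ℝ, 0 < l → ∀ xhat : ℝ, 0 < xhat →
      l * ((β * xhat + 1) / (xhat + γ)) ^ d = xhat →
      deriv (fun x : ℝ => l * ((β * x + 1) / (x + γ)) ^ d) xhat < 1 := by
  have key : ∀ x : ℝ, 0 < x → d * (β * γ - 1) * x < (β * x + 1) * (x + γ) := fun x hx =>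
    calc d * (β * γ - 1) * x < (√(β * γ) + 1) ^ 2 * x := by
          gcongr; exact mul_sub_one_lt_sqrt_add_one_sq h1 hdc
      _ ≤ (β * x + 1) * (x + γ) := sqrt_mul_add_one_sq_mul_le hβ.le hγ.le hx.le
  refine ⟨key, fun l _ xhat hx hfix => ?_⟩
  have hnum : 0 < β * xhat + 1 := by positivity
  have hden : 0 < xhat + γ := by positivity
  rw [(hasDerivAt_mul_div_rpow hnum.ne' hden.ne').deriv, hfix, div_lt_one (by positivity)]
  exact key xhat hx

theorem stmt_7 (β γ d : ℝ) (hβ : 0 < β) (hγ : 0 < γ) (h1 : 1 < β * γ) (hd : 0 < d)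
    (hdc : d < (Real.sqrt (β * γ) + 1) / (Real.sqrt (β * γ) - 1)) :
    (∀ x : ℝ, 0 < x → d * (β * γ - 1) * x < (β * x + 1) * (x + γ)) ∧
    ∀ l : ℝ, 0 < l → ∀ xhat : ℝ, 0 < xhat →
      l * ((β * xhat + 1) / (xhat + γ)) ^ d = xhat →
      deriv (fun x : ℝ => l * ((β * x + 1) / (x + γ)) ^ d) xhat < 1 :=
  stmt_7_general β γ d hβ hγ h1 hdc
end

section
/- For βγ > 1 and x > 0, the key inequality (βx+1)(x+γ) − d(βγ−1)x ≥ (√β·x − √γ)² holds when d = Δ_c = (√(βγ)+1)/(√(βγ)−1); that is, (βx+1)(x+γ) − Δ_c(βγ−1)x = (√β·x − √γ)². -/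
/-! With `s = √(βγ)` one has `βγ - 1 = (s - 1)(s + 1)`, so `Δ_c (βγ - 1) = (s + 1)²` and the left side
becomes `βx² + (βγ + 1)x + γ - (s + 1)²x = βx² - 2sx + γ`, a perfect square since `s = √β √γ`. -/

theorem add_one_div_sub_one_mul_sq_sub_one {K : Type*} [Field K] {s : K} (hs : s ≠ 1) :
    (s + 1) / (s - 1) * (s ^ 2 - 1) = (s + 1) ^ 2 := by
  have : s - 1 ≠ 0 := sub_ne_zero.mpr hs
  field_simp
  ring

theorem mul_add_one_mul_add_sub_sq_sqrt_mul {β γ : ℝ} (hβ : 0 ≤ β) (hγ : 0 ≤ γ) (x : ℝ) :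
    (β * x + 1) * (x + γ) - (Real.sqrt (β * γ) + 1) ^ 2 * x = (Real.sqrt β * x - Real.sqrt γ) ^ 2 := by
  have hs : Real.sqrt (β * γ) = Real.sqrt β * Real.sqrt γ := Real.sqrt_mul hβ γ
  have hsq : Real.sqrt (β * γ) ^ 2 = β * γ := Real.sq_sqrt (mul_nonneg hβ hγ)
  have hb : Real.sqrt β ^ 2 = β := Real.sq_sqrt hβ
  have hg : Real.sqrt γ ^ 2 = γ := Real.sq_sqrt hγ
  linear_combination (-x ^ 2) * hb - hg - x * hsq - 2 * x * hs

theorem stmt_8_general (β γ x : ℝ) (hβ : 0 < β) (hγ : 0 < γ) (h1 : 1 < β * γ) :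
    (β * x + 1) * (x + γ) -
        (Real.sqrt (β * γ) + 1) / (Real.sqrt (β * γ) - 1) * (β * γ - 1) * x =
      (Real.sqrt β * x - Real.sqrt γ) ^ 2 := by
  have hs : Real.sqrt (β * γ) ≠ 1 := Real.sqrt_eq_one.not.mpr h1.ne'
  have hsq : β * γ - 1 = Real.sqrt (β * γ) ^ 2 - 1 := by
    rw [Real.sq_sqrt (mul_pos hβ hγ).le]
  rw [hsq, add_one_div_sub_one_mul_sq_sub_one hs]
  exact mul_add_one_mul_add_sub_sq_sqrt_mul hβ.le hγ.le x

theorem stmt_8 (β γ x : ℝ) (hβ : 0 < β) (hγ : 0 < γ) (h1 : 1 < β * γ) (hx : 0 < x) :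
    (β * x + 1) * (x + γ) -
        (Real.sqrt (β * γ) + 1) / (Real.sqrt (β * γ) - 1) * (β * γ - 1) * x =
      (Real.sqrt β * x - Real.sqrt γ) ^ 2 :=
  stmt_8_general β γ x hβ hγ h1
end

section
/- Let f_d(x) = λ((βx+1)/(x+γ))^d with βγ > 1 and λ, d > 0. Then f_d''(x) has the same sign as d(βγ−1) − (βγ+1) − 2βx; in particular if d < (βγ+1)/(βγ−1) then f_d is strictly concave on (0, ∞) and has a unique positive fixed point. -/
/-!
With `c = d (βγ - 1)` and `P(x) = (βx + 1)(x + γ)`, one has `f_d' = c f_d / P`, and differentiating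
once more gives `f_d'' = c f_d (c - (βγ + 1) - 2βx) / P²` with a positive prefactor `c f_d / P²`.
If `d < (βγ + 1)/(βγ - 1)` then `c < βγ + 1`, so `f_d'' < 0` on `[0, ∞)`. A concave function on
`[0, ∞)` with `f 0 > 0` lies strictly above the diagonal to the left of any point where it is at
least the diagonal, so it has at most one positive fixed point; one exists by the intermediate
value theorem, because `f_d < λ β^d` on `[0, ∞)`.
-/

open Set

lemma Real.sign_mul_of_pos {k : ℝ} (hk : 0 < k) (r : ℝ) : Real.sign (k * r) = Real.sign r := by
  rcases lt_trichotomy r 0 with h | rfl | h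
  · rw [Real.sign_of_neg h, Real.sign_of_neg (mul_neg_of_pos_of_neg hk h)]
  · rw [mul_zero]
  · rw [Real.sign_of_pos h, Real.sign_of_pos (mul_pos hk h)]

section FixedPoint

variable {f : ℝ → ℝ}

lemma ConcaveOn.self_lt_apply_of_le_apply (hf : ConcaveOn ℝ (Ici 0) f) (h0 : 0 < f 0)
    {a b : ℝ} (ha : 0 ≤ a) (hab : a < b) (hb : b ≤ f b) : a < f a := by
  have hb0 : 0 < b := ha.trans_lt hab
  have hconc := hf.2 self_mem_Ici (mem_Ici.mpr hb0.le)
    (sub_nonneg.mpr ((div_le_one hb0).mpr hab.le)) (div_nonneg ha hb0.le) (sub_add_cancel 1 _)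
  simp only [smul_eq_mul, mul_zero, zero_add, div_mul_cancel₀ a hb0.ne'] at hconc
  have hweight : 0 < 1 - a / b := sub_pos.mpr ((div_lt_one hb0).mpr hab)
  calc a = a / b * b := (div_mul_cancel₀ a hb0.ne').symm
    _ < (1 - a / b) * f 0 + a / b * f b := by
        nlinarith [mul_pos hweight h0, mul_le_mul_of_nonneg_left hb (div_nonneg ha hb0.le)]
    _ ≤ f a := hconc

lemma ConcaveOn.existsUnique_pos_fixedPoint (hf : ConcaveOn ℝ (Ici 0) f)
    (hcont : ContinuousOn f (Ici 0)) (h0 : 0 < f 0) {M : ℝ} (hM : 0 ≤ M) (hfM : f M < M) :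
    ∃! x, 0 < x ∧ f x = x := by
  have hg : ContinuousOn (fun x => f x - x) (Icc 0 M) :=
    (hcont.mono Icc_subset_Ici_self).sub continuousOn_id
  obtain ⟨x, hx, hfx⟩ : ∃ x ∈ Ioo 0 M, f x - x = 0 :=
    intermediate_value_Ioo' hM hg ⟨by linarith, by simpa using h0⟩
  refine ⟨x, ⟨hx.1, sub_eq_zero.mp hfx⟩, fun y ⟨hy, hfy⟩ => ?_⟩
  rcases lt_trichotomy y x with hyx | rfl | hxy
  · exact absurd hfy (hf.self_lt_apply_of_le_apply h0 hy.le hyx (sub_eq_zero.mp hfx).ge).ne'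
  · rfl
  · exact absurd (sub_eq_zero.mp hfx) (hf.self_lt_apply_of_le_apply h0 hx.1.le hxy hfy.ge).ne'

end FixedPoint

noncomputable def fd (β γ lam d x : ℝ) : ℝ := lam * ((β * x + 1) / (x + γ)) ^ d

section fd

variable {β γ lam d x : ℝ}

lemma fd_pos (hlam : 0 < lam) (hnum : 0 < β * x + 1) (hden : 0 < x + γ) :
    0 < fd β γ lam d x :=
  mul_pos hlam (Real.rpow_pos_of_pos (div_pos hnum hden) d)

lemma hasDerivAt_fd (hnum : 0 < β * x + 1) (hden : 0 < x + γ) :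
    HasDerivAt (fd β γ lam d)
      (d * (β * γ - 1) * fd β γ lam d x / ((β * x + 1) * (x + γ))) x := by
  have hratio : HasDerivAt (fun y => (β * y + 1) / (y + γ)) ((β * γ - 1) / (x + γ) ^ 2) x := by
    have := (((hasDerivAt_id' x).const_mul β).add_const 1).div
      ((hasDerivAt_id' x).add_const γ) hden.ne'
    exact this.congr_deriv (by ring)
  have hpos : 0 < (β * x + 1) / (x + γ) := div_pos hnum hden
  refine ((hratio.rpow_const (p := d) (Or.inl hpos.ne')).const_mul lam).congr_deriv ?_
  rw [fd, Real.rpow_sub hpos, Real.rpow_one]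
  field_simp

lemma hasDerivAt_deriv_fd (hnum : 0 < β * x + 1) (hden : 0 < x + γ) :
    HasDerivAt (deriv (fd β γ lam d))
      (d * (β * γ - 1) * fd β γ lam d x * (d * (β * γ - 1) - (β * γ + 1) - 2 * β * x) /
        ((β * x + 1) * (x + γ)) ^ 2) x := by
  set c := d * (β * γ - 1)
  have hnear : ∀ᶠ y in nhds x, 0 < β * y + 1 ∧ 0 < y + γ :=
    (continuousAt_const.eventually_lt (g := fun y => β * y + 1) (by fun_prop) hnum).and
      (continuousAt_const.eventually_lt (g := fun y => y + γ) (by fun_prop) hden)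
  have hderiv : deriv (fd β γ lam d) =ᶠ[nhds x]
      fun y => c * fd β γ lam d y / ((β * y + 1) * (y + γ)) :=
    hnear.mono fun _ ⟨hnum', hden'⟩ => (hasDerivAt_fd hnum' hden').deriv
  have hP : HasDerivAt (fun y => (β * y + 1) * (y + γ)) (β * (x + γ) + (β * x + 1) * 1) x :=
    (((hasDerivAt_id' x).const_mul β).add_const 1).mul ((hasDerivAt_id' x).add_const γ)
      |>.congr_deriv (by ring)
  refine (((hasDerivAt_fd hnum hden).const_mul c).div hP (mul_pos hnum hden).ne')
    |>.congr_of_eventuallyEq hderiv |>.congr_deriv ?_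
  field_simp
  ring

lemma deriv2_fd (hnum : 0 < β * x + 1) (hden : 0 < x + γ) :
    deriv (deriv (fd β γ lam d)) x =
      d * (β * γ - 1) * fd β γ lam d x * (d * (β * γ - 1) - (β * γ + 1) - 2 * β * x) /
        ((β * x + 1) * (x + γ)) ^ 2 :=
  (hasDerivAt_deriv_fd hnum hden).deriv

lemma sign_deriv2_fd (hlam : 0 < lam) (hc : 0 < d * (β * γ - 1)) (hnum : 0 < β * x + 1)
    (hden : 0 < x + γ) :
    Real.sign (deriv (deriv (fd β γ lam d)) x) =
      Real.sign (d * (β * γ - 1) - (β * γ + 1) - 2 * β * x) := by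
  rw [deriv2_fd hnum hden, mul_div_right_comm]
  exact Real.sign_mul_of_pos (div_pos (mul_pos hc (fd_pos hlam hnum hden)) (by positivity)) _

lemma continuousOn_fd (hd : 0 ≤ d) : ContinuousOn (fd β γ lam d) (Ioi (-γ)) :=
  continuousOn_const.mul
    (((by fun_prop : Continuous fun y => β * y + 1).continuousOn.div
      (by fun_prop : Continuous fun y => y + γ).continuousOn
        fun _ (hy : -γ < _) => by linarith).rpow_const fun _ _ => Or.inr hd)

lemma fd_lt (hβ : 0 ≤ β) (h1 : 1 < β * γ) (hlam : 0 < lam) (hd : 0 < d) (hx : 0 ≤ x) :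
    fd β γ lam d x < lam * β ^ d := by
  have hden : 0 < x + γ := by nlinarith
  have hratio : (β * x + 1) / (x + γ) < β := by
    rw [div_lt_iff₀ hden]
    linarith
  exact mul_lt_mul_of_pos_left
    (Real.rpow_lt_rpow (div_nonneg (by positivity) hden.le) hratio hd) hlam

lemma strictConcaveOn_fd (hβ : 0 < β) (hγ : 0 < γ) (hlam : 0 < lam) (h1 : 1 < β * γ)
    (hd : 0 < d) (hdc : d < (β * γ + 1) / (β * γ - 1)) :
    StrictConcaveOn ℝ (Ici 0) (fd β γ lam d) := by
  have hc : d * (β * γ - 1) < β * γ + 1 := (lt_div_iff₀ (by linarith)).mp hdc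
  refine strictConcaveOn_of_deriv2_neg (convex_Ici 0)
    ((continuousOn_fd hd.le).mono (Ici_subset_Ioi.mpr (by linarith)))
    fun x hx => ?_
  rw [interior_Ici, mem_Ioi] at hx
  have hnum : 0 < β * x + 1 := by positivity
  have hden : 0 < x + γ := by positivity
  show deriv (deriv (fd β γ lam d)) x < 0
  rw [deriv2_fd hnum hden]
  exact div_neg_of_neg_of_pos (mul_neg_of_pos_of_neg
    (mul_pos (mul_pos hd (by linarith)) (fd_pos hlam hnum hden)) (by nlinarith)) (by positivity)

end fd

theorem stmt_9_general (β γ lam d : ℝ) (hγ : 0 < γ) (hlam : 0 < lam)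
    (h1 : 1 < β * γ) (hd : 0 < d) :
    (∀ x : ℝ, 0 < x →
        Real.sign (deriv (deriv (fun y : ℝ => lam * ((β * y + 1) / (y + γ)) ^ d)) x) =
          Real.sign (d * (β * γ - 1) - (β * γ + 1) - 2 * β * x)) ∧
    (d < (β * γ + 1) / (β * γ - 1) →
      StrictConcaveOn ℝ (Set.Ioi 0) (fun y : ℝ => lam * ((β * y + 1) / (y + γ)) ^ d) ∧
      ∃! x : ℝ, 0 < x ∧ lam * ((β * x + 1) / (x + γ)) ^ d = x) := by
  have hβ : 0 < β := pos_of_mul_pos_left (one_pos.trans h1) hγ.le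
  refine ⟨fun x hx => sign_deriv2_fd hlam (mul_pos hd (by linarith)) (by positivity)
    (by positivity), fun hdc => ?_⟩
  have hconc := strictConcaveOn_fd hβ hγ hlam h1 hd hdc
  refine ⟨hconc.subset Ioi_subset_Ici_self (convex_Ioi 0), ?_⟩
  have hcont : ContinuousOn (fd β γ lam d) (Ici 0) :=
    (continuousOn_fd hd.le).mono (Ici_subset_Ioi.mpr (by linarith))
  exact hconc.concaveOn.existsUnique_pos_fixedPoint hcont
    (fd_pos hlam (by simp) (by simpa using hγ)) (by positivity)
    (fd_lt hβ.le h1 hlam hd (by positivity))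

theorem stmt_9 (β γ lam d : ℝ) (hβ : 0 < β) (hγ : 0 < γ) (hlam : 0 < lam)
    (h1 : 1 < β * γ) (hd : 0 < d) :
    (∀ x : ℝ, 0 < x →
        Real.sign (deriv (deriv (fun y : ℝ => lam * ((β * y + 1) / (y + γ)) ^ d)) x) =
          Real.sign (d * (β * γ - 1) - (β * γ + 1) - 2 * β * x)) ∧
    (d < (β * γ + 1) / (β * γ - 1) →
      StrictConcaveOn ℝ (Set.Ioi 0) (fun y : ℝ => lam * ((β * y + 1) / (y + γ)) ^ d) ∧
      ∃! x : ℝ, 0 < x ∧ lam * ((β * x + 1) / (x + γ)) ^ d = x) :=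
  stmt_9_general β γ lam d hγ hlam h1 hd
end

section
/- With β ≤ γ, βγ > 1, d ≥ Δ_c real, and x_i(d) (i = 0,1) the roots of (βx+1)(x+γ) = d(βγ−1)x, define g_i(d) = x_i(d)·((x_i(d)+γ)/(βx_i(d)+1))^d. Then the logarithmic derivative satisfies g_i'(d)/g_i(d) = log((x_i(d)+γ)/(βx_i(d)+1)). In particular, if β ≤ 1 then both g₀ and g₁ are increasing in d. -/
/-!
This is the envelope theorem. Write `φ x = (x + γ) / (β x + 1)`. The quadratic says exactly
that `x = X d` is a critical point of `x ↦ x * φ x ^ d`, so in the derivative of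
`e ↦ X e * φ (X e) ^ e` the terms carrying `X'` cancel and only
`∂/∂e (x * φ x ^ e) = x * φ x ^ e * log (φ x)` survives. For `β ≤ 1 < β γ` and `x > 0` we have
`φ x > 1`, so this derivative is positive.
-/

open Real Set

theorem hasDerivAt_mul_comp_rpow_of_critical {X φ : ℝ → ℝ} {X' φ' d : ℝ}
    (hX : HasDerivAt X X' d) (hφ : HasDerivAt φ φ' (X d)) (hpos : 0 < φ (X d))
    (hcrit : d * X d * φ' = -φ (X d)) :
    HasDerivAt (fun e => X e * φ (X e) ^ e) (X d * φ (X d) ^ d * log (φ (X d))) d := by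
  refine (hX.mul ((hφ.comp d hX).rpow (hasDerivAt_id d) hpos)).congr_deriv ?_
  simp only [Function.comp_apply, id]
  rw [rpow_sub_one hpos.ne']
  field_simp
  linear_combination X' * hcrit

theorem hasDerivAt_moebius (β γ x : ℝ) (hx : β * x + 1 ≠ 0) :
    HasDerivAt (fun y => (y + γ) / (β * y + 1)) ((1 - β * γ) / (β * x + 1) ^ 2) x := by
  refine (((hasDerivAt_id x).add_const γ).div
    (((hasDerivAt_id x).const_mul β).add_const 1) hx).congr_deriv ?_
  simp only [id]
  ring

theorem one_lt_moebius {β γ x : ℝ} (hβ : 0 < β) (hβ1 : β ≤ 1) (h1 : 1 < β * γ) (hx : 0 < x) :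
    1 < (x + γ) / (β * x + 1) := by
  rw [one_lt_div (by positivity)]
  nlinarith [mul_nonneg (sub_nonneg.2 hβ1) hx.le]

theorem hasDerivAt_mul_moebius_rpow {β γ d : ℝ} {X : ℝ → ℝ} (hβ : 0 < β) (hγ : 0 < γ)
    (hXd : 0 < X d) (hroot : (β * X d + 1) * (X d + γ) = d * (β * γ - 1) * X d)
    (hX : DifferentiableAt ℝ X d) :
    HasDerivAt (fun e => X e * ((X e + γ) / (β * X e + 1)) ^ e)
      (X d * ((X d + γ) / (β * X d + 1)) ^ d * log ((X d + γ) / (β * X d + 1))) d := by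
  have hB : 0 < β * X d + 1 := by positivity
  refine hasDerivAt_mul_comp_rpow_of_critical (φ := fun y => (y + γ) / (β * y + 1))
    hX.hasDerivAt (hasDerivAt_moebius β γ (X d) hB.ne') (by positivity) ?_
  show d * X d * ((1 - β * γ) / (β * X d + 1) ^ 2) = -((X d + γ) / (β * X d + 1))
  field_simp
  linear_combination hroot

theorem stmt_11_general (β γ : ℝ) (hβ : 0 < β) (hγ : 0 < γ) (h1 : 1 < β * γ)
    (X : ℝ → ℝ)
    (hXpos : ∀ d ∈ Set.Ioi ((Real.sqrt (β * γ) + 1) / (Real.sqrt (β * γ) - 1)), 0 < X d)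
    (hroot : ∀ d ∈ Set.Ioi ((Real.sqrt (β * γ) + 1) / (Real.sqrt (β * γ) - 1)),
      (β * X d + 1) * (X d + γ) = d * (β * γ - 1) * X d)
    (hXdiff : ∀ d ∈ Set.Ioi ((Real.sqrt (β * γ) + 1) / (Real.sqrt (β * γ) - 1)),
      DifferentiableAt ℝ X d) :
    (∀ d ∈ Set.Ioi ((Real.sqrt (β * γ) + 1) / (Real.sqrt (β * γ) - 1)),
      deriv (fun e : ℝ => X e * ((X e + γ) / (β * X e + 1)) ^ e) d =
        (X d * ((X d + γ) / (β * X d + 1)) ^ d) *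
          Real.log ((X d + γ) / (β * X d + 1))) ∧
    (β ≤ 1 →
      StrictMonoOn (fun e : ℝ => X e * ((X e + γ) / (β * X e + 1)) ^ e)
        (Set.Ioi ((Real.sqrt (β * γ) + 1) / (Real.sqrt (β * γ) - 1)))) := by
  set Δ := (Real.sqrt (β * γ) + 1) / (Real.sqrt (β * γ) - 1)
  have hderiv := fun d (hd : d ∈ Ioi Δ) =>
    hasDerivAt_mul_moebius_rpow hβ hγ (hXpos d hd) (hroot d hd) (hXdiff d hd)
  refine ⟨fun d hd => (hderiv d hd).deriv, fun hβ1 => ?_⟩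
  refine strictMonoOn_of_deriv_pos (convex_Ioi Δ)
    (fun d hd => (hderiv d hd).continuousAt.continuousWithinAt) fun d hd => ?_
  rw [interior_Ioi] at hd
  have hXd := hXpos d hd
  rw [(hderiv d hd).deriv]
  exact mul_pos (mul_pos hXd (rpow_pos_of_pos (by positivity) d))
    (log_pos (one_lt_moebius hβ hβ1 h1 hXd))

theorem stmt_11 (β γ : ℝ) (hβ : 0 < β) (hγ : 0 < γ) (h1 : 1 < β * γ) (hle : β ≤ γ)
    (X : ℝ → ℝ)
    (hXpos : ∀ d ∈ Set.Ioi ((Real.sqrt (β * γ) + 1) / (Real.sqrt (β * γ) - 1)), 0 < X d)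
    (hroot : ∀ d ∈ Set.Ioi ((Real.sqrt (β * γ) + 1) / (Real.sqrt (β * γ) - 1)),
      (β * X d + 1) * (X d + γ) = d * (β * γ - 1) * X d)
    (hXdiff : ∀ d ∈ Set.Ioi ((Real.sqrt (β * γ) + 1) / (Real.sqrt (β * γ) - 1)),
      DifferentiableAt ℝ X d) :
    (∀ d ∈ Set.Ioi ((Real.sqrt (β * γ) + 1) / (Real.sqrt (β * γ) - 1)),
      deriv (fun e : ℝ => X e * ((X e + γ) / (β * X e + 1)) ^ e) d =
        (X d * ((X d + γ) / (β * X d + 1)) ^ d) *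
          Real.log ((X d + γ) / (β * X d + 1))) ∧
    (β ≤ 1 →
      StrictMonoOn (fun e : ℝ => X e * ((X e + γ) / (β * X e + 1)) ^ e)
        (Set.Ioi ((Real.sqrt (β * γ) + 1) / (Real.sqrt (β * γ) - 1)))) :=
  stmt_11_general β γ hβ hγ h1 X hXpos hroot hXdiff
end

section
/- At d = Δ_c and λ = λ_c, the symmetric tree recursion f(x) = λ_c((βx+1)/(x+γ))^{Δ_c} satisfies: x̂ = √(γ/β) is a fixed point, f'(x̂) = 1, and f''(x̂) = 0. -/
/-!
Write `f = L · g ^ d` with `g x = (β x + 1) / (x + γ)`. Its logarithmic derivative is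
`f' / f = d (βγ - 1) / ((β x + 1)(x + γ))`, so `f'' = f' (f' / f - β / (β x + 1) - 1 / (x + γ))`.
The point `x̂ = √(γ / β)` is characterised by `β x̂² = γ`, which gives `g x̂ = 1 / x̂` and
`β / (β x̂ + 1) + 1 / (x̂ + γ) = 1 / x̂`. Since `β x̂ = √(βγ)`, `λ_c = x̂ ^ (Δ_c + 1)` and
`Δ_c = (β x̂ + 1) / (β x̂ - 1)`. So `f x̂ = x̂`, then `f' x̂ = Δ_c ((β x̂)² - 1) / (β x̂ + 1)² = 1`,
and finally `f'' x̂ = 1 / x̂ - 1 / x̂ = 0`.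
-/

open Filter Topology

noncomputable def treeRecursion (β γ d L x : ℝ) : ℝ := L * ((β * x + 1) / (x + γ)) ^ d

section TreeRecursion

variable {β γ d L x : ℝ}

theorem hasDerivAt_treeRecursion (hx₁ : 0 < β * x + 1) (hx₂ : 0 < x + γ) :
    HasDerivAt (treeRecursion β γ d L)
      (d * (β * γ - 1) * treeRecursion β γ d L x / ((β * x + 1) * (x + γ))) x := by
  have hg : HasDerivAt (fun y => (β * y + 1) / (y + γ)) ((β * γ - 1) / (x + γ) ^ 2) x :=
    ((((hasDerivAt_id' x).const_mul β).add_const 1).fun_div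
      ((hasDerivAt_id' x).add_const γ) hx₂.ne').congr_deriv (by ring)
  refine ((hg.rpow_const (p := d) (Or.inl (div_pos hx₁ hx₂).ne')).const_mul L).congr_deriv ?_
  rw [treeRecursion, Real.rpow_sub_one (div_pos hx₁ hx₂).ne']
  field_simp

theorem deriv_treeRecursion_eventuallyEq (hx₁ : 0 < β * x + 1) (hx₂ : 0 < x + γ) :
    deriv (treeRecursion β γ d L) =ᶠ[𝓝 x]
      fun y => d * (β * γ - 1) * treeRecursion β γ d L y / ((β * y + 1) * (y + γ)) := by
  have hU₁ : ∀ᶠ y in 𝓝 x, 0 < β * y + 1 :=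
    continuousAt_const.eventually_lt (by fun_prop) hx₁
  have hU₂ : ∀ᶠ y in 𝓝 x, 0 < y + γ := continuousAt_const.eventually_lt (by fun_prop) hx₂
  filter_upwards [hU₁, hU₂] with y hy₁ hy₂
  exact (hasDerivAt_treeRecursion hy₁ hy₂).deriv

theorem hasDerivAt_deriv_treeRecursion (hx₁ : 0 < β * x + 1) (hx₂ : 0 < x + γ)
    (hf : treeRecursion β γ d L x ≠ 0) :
    HasDerivAt (deriv (treeRecursion β γ d L))
      (deriv (treeRecursion β γ d L) x *
        (deriv (treeRecursion β γ d L) x / treeRecursion β γ d L x -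
          β / (β * x + 1) - 1 / (x + γ))) x := by
  have hq : HasDerivAt (fun y => (β * y + 1) * (y + γ)) (β * (x + γ) + (β * x + 1)) x :=
    ((((hasDerivAt_id' x).const_mul β).add_const 1).fun_mul
      ((hasDerivAt_id' x).add_const γ)).congr_deriv (by ring)
  have hf' := hasDerivAt_treeRecursion (d := d) (L := L) hx₁ hx₂
  refine (((hf'.const_mul (d * (β * γ - 1))).fun_div hq (by positivity)).congr_of_eventuallyEq
    (deriv_treeRecursion_eventuallyEq hx₁ hx₂)).congr_deriv ?_
  rw [hf'.deriv]
  field_simp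
  ring

end TreeRecursion

section CriticalPoint

variable {β γ x : ℝ}

theorem treeRecursion_apply_eq_self (d : ℝ) (hx : 0 < x) (hβx : 0 < β * x + 1)
    (hγ : β * x ^ 2 = γ) : treeRecursion β γ d (x ^ (d + 1)) x = x := by
  have hg : (β * x + 1) / (x + γ) = x⁻¹ := by
    rw [← hγ, show x + β * x ^ 2 = x * (β * x + 1) by ring, div_mul_cancel_right₀ hβx.ne']
  rw [treeRecursion, hg, Real.inv_rpow hx.le, Real.rpow_add hx, Real.rpow_one]
  field_simp

theorem deriv_treeRecursion_eq_one (hx : 0 < x) (hβx : 1 < β * x) (hγ : β * x ^ 2 = γ) :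
    deriv (treeRecursion β γ ((β * x + 1) / (β * x - 1))
      (x ^ ((β * x + 1) / (β * x - 1) + 1))) x = 1 := by
  have hβx₁ : 0 < β * x + 1 := by linarith
  rw [(hasDerivAt_treeRecursion hβx₁ (by nlinarith)).deriv,
    treeRecursion_apply_eq_self _ hx hβx₁ hγ, ← hγ]
  have : β * x - 1 ≠ 0 := by linarith
  field_simp
  ring

theorem deriv_deriv_treeRecursion_eq_zero (hx : 0 < x) (hβx : 1 < β * x)
    (hγ : β * x ^ 2 = γ) :
    deriv (deriv (treeRecursion β γ ((β * x + 1) / (β * x - 1))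
      (x ^ ((β * x + 1) / (β * x - 1) + 1)))) x = 0 := by
  have hβx₁ : 0 < β * x + 1 := by linarith
  have hfix := treeRecursion_apply_eq_self ((β * x + 1) / (β * x - 1)) hx hβx₁ hγ
  rw [(hasDerivAt_deriv_treeRecursion hβx₁ (by nlinarith) (by rw [hfix]; exact hx.ne')).deriv,
    deriv_treeRecursion_eq_one hx hβx hγ, hfix, ← hγ, show x + β * x ^ 2 = x * (β * x + 1) by ring,
    one_mul, sub_sub, sub_eq_zero, div_add_div _ _ hβx₁.ne' (by positivity),
    div_eq_div_iff hx.ne' (by positivity)]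
  ring

end CriticalPoint

theorem mul_sqrt_div_eq_sqrt_mul {β : ℝ} (hβ : 0 < β) (γ : ℝ) :
    β * √(γ / β) = √(β * γ) := by
  rw [show β * γ = β ^ 2 * (γ / β) by field_simp, Real.sqrt_mul (sq_nonneg β),
    Real.sqrt_sq hβ.le]

theorem stmt_12_general (β γ : ℝ) (hβ : 0 < β) (h1 : 1 < β * γ) :
    (γ / β) ^ (Real.sqrt (β * γ) / (Real.sqrt (β * γ) - 1)) *
        ((β * Real.sqrt (γ / β) + 1) / (Real.sqrt (γ / β) + γ)) ^
          ((Real.sqrt (β * γ) + 1) / (Real.sqrt (β * γ) - 1)) =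
      Real.sqrt (γ / β) ∧
    deriv
        (fun x : ℝ =>
          (γ / β) ^ (Real.sqrt (β * γ) / (Real.sqrt (β * γ) - 1)) *
            ((β * x + 1) / (x + γ)) ^ ((Real.sqrt (β * γ) + 1) / (Real.sqrt (β * γ) - 1)))
        (Real.sqrt (γ / β)) = 1 ∧
    deriv
        (deriv
          (fun x : ℝ =>
            (γ / β) ^ (Real.sqrt (β * γ) / (Real.sqrt (β * γ) - 1)) *
              ((β * x + 1) / (x + γ)) ^
                ((Real.sqrt (β * γ) + 1) / (Real.sqrt (β * γ) - 1))))
        (Real.sqrt (γ / β)) = 0 := by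
  have hγβ : 0 < γ / β := div_pos (pos_of_mul_pos_right (show 0 < β * γ by linarith) hβ.le) hβ
  set x := √(γ / β)
  have hx : 0 < x := Real.sqrt_pos.2 hγβ
  have hγ : β * x ^ 2 = γ := by rw [Real.sq_sqrt hγβ.le]; field_simp
  have hβx : β * x = √(β * γ) := mul_sqrt_div_eq_sqrt_mul hβ γ
  have hβx₁ : 1 < β * x := by rw [hβx, ← Real.sqrt_one]; exact Real.sqrt_lt_sqrt zero_le_one h1
  have hL : (γ / β) ^ (β * x / (β * x - 1)) = x ^ ((β * x + 1) / (β * x - 1) + 1) := by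
    have : β * x - 1 ≠ 0 := by linarith
    rw [← Real.sq_sqrt hγβ.le, ← Real.rpow_natCast, ← Real.rpow_mul (Real.sqrt_nonneg _)]
    congr 1
    field_simp
    ring
  rw [← hβx, hL]
  exact ⟨treeRecursion_apply_eq_self _ hx (by linarith) hγ,
    deriv_treeRecursion_eq_one hx hβx₁ hγ, deriv_deriv_treeRecursion_eq_zero hx hβx₁ hγ⟩

theorem stmt_12 (β γ : ℝ) (hβ : 0 < β) (hγ : 0 < γ) (h1 : 1 < β * γ) (hle : β ≤ γ) :
    (γ / β) ^ (Real.sqrt (β * γ) / (Real.sqrt (β * γ) - 1)) *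
        ((β * Real.sqrt (γ / β) + 1) / (Real.sqrt (γ / β) + γ)) ^
          ((Real.sqrt (β * γ) + 1) / (Real.sqrt (β * γ) - 1)) =
      Real.sqrt (γ / β) ∧
    deriv
        (fun x : ℝ =>
          (γ / β) ^ (Real.sqrt (β * γ) / (Real.sqrt (β * γ) - 1)) *
            ((β * x + 1) / (x + γ)) ^ ((Real.sqrt (β * γ) + 1) / (Real.sqrt (β * γ) - 1)))
        (Real.sqrt (γ / β)) = 1 ∧
    deriv
        (deriv
          (fun x : ℝ =>
            (γ / β) ^ (Real.sqrt (β * γ) / (Real.sqrt (β * γ) - 1)) *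
              ((β * x + 1) / (x + γ)) ^
                ((Real.sqrt (β * γ) + 1) / (Real.sqrt (β * γ) - 1))))
        (Real.sqrt (γ / β)) = 0 :=
  stmt_12_general β γ hβ h1
end

section
/- Let 1 ≤ β ≤ γ with βγ > 1 and 0 < λ ≤ (γ−1)/(β−1) (interpreting the bound as +∞ when β = 1). For any finite graph G with external fields π(v) ≤ λ at every vertex, the marginal probability p_v that any vertex v is assigned spin 0 in the Gibbs measure satisfies p_v ≤ λ/(λ+1). -/
/-!
Writing `Z_s` for the partition function with the spin of `v` pinned to `s`, the claim is
`Z_false ≤ λ Z_true`. We prove this for every multigraph (a list of edges, loops allowed) and every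
field `0 ≤ π ≤ λ`, by induction on the number of edges. Without edges the weight is a product
measure and `Z_false = π(v) Z_true`. A loop at `a` contributes the factor `γ` and rescales `π(a)` by
`β / γ ≤ 1`. For a proper edge `ab` with `v ≠ b` (otherwise swap its endpoints), the random cluster
identity `Z(G) = Z(G - ab) + (γ - 1) Z(G / ab)` holds for both pinned partition functions; the
merged vertex gets the field `π(a) π(b) (β - 1) / (γ - 1) ≤ λ² (β - 1) / (γ - 1) ≤ λ`, so both
graphs on the right satisfy the bound by induction, and `γ - 1 ≥ 0` adds them up.
-/

open Finset Function

namespace TwoSpin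

def bondWeight (β γ : ℝ) : Bool → Bool → ℝ
  | false, false => β
  | true, true => γ
  | _, _ => 1

lemma bondWeight_comm (β γ : ℝ) (s t : Bool) : bondWeight β γ s t = bondWeight β γ t s := by
  cases s <;> cases t <;> rfl

lemma bondWeight_eq_one_add (β γ : ℝ) (s t : Bool) :
    bondWeight β γ s t = 1 + if s = t then bondWeight β γ s s - 1 else 0 := by
  cases s <;> cases t <;> simp [bondWeight]

lemma bondWeight_nonneg {β γ : ℝ} (hβ : 0 ≤ β) (hγ : 0 ≤ γ) (s t : Bool) :
    0 ≤ bondWeight β γ s t := by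
  cases s <;> cases t <;> simp [bondWeight, hβ, hγ]

lemma div_add_le_div_add_one {x y l : ℝ} (hx : 0 ≤ x) (hy : 0 ≤ y) (hl : 0 < l)
    (h : x ≤ l * y) : x / (x + y) ≤ l / (l + 1) := by
  rcases (add_nonneg hx hy).eq_or_lt with h0 | h0
  · rw [← h0, div_zero]
    positivity
  · rw [div_le_div_iff₀ h0 (by linarith)]
    nlinarith

section Edges

variable {V : Type*}

def edgeWeight (β γ : ℝ) (σ : V → Bool) : Sym2 V → ℝ :=
  Sym2.lift ⟨fun a b => bondWeight β γ (σ a) (σ b), fun _ _ => bondWeight_comm β γ _ _⟩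

lemma edgeWeight_mk (β γ : ℝ) (σ : V → Bool) (a b : V) :
    edgeWeight β γ σ s(a, b) = bondWeight β γ (σ a) (σ b) := rfl

lemma edgeWeight_map {W : Type*} (β γ : ℝ) (σ : W → Bool) (f : V → W) (e : Sym2 V) :
    edgeWeight β γ σ (e.map f) = edgeWeight β γ (σ ∘ f) e := by
  induction e using Sym2.ind with
  | h a b => rfl

lemma edgeWeight_nonneg {β γ : ℝ} (hβ : 0 ≤ β) (hγ : 0 ≤ γ) (σ : V → Bool) (e : Sym2 V) :
    0 ≤ edgeWeight β γ σ e := by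
  induction e using Sym2.ind with
  | h a b => exact bondWeight_nonneg hβ hγ _ _

end Edges

section Fields

variable {V : Type*} [DecidableEq V]

def flipAt (b : V) : Equiv.Perm (V → Bool) :=
  Involutive.toPerm (fun σ => update σ b (!σ b)) fun σ => by simp

lemma flipAt_apply (b : V) (σ : V → Bool) : flipAt b σ = update σ b (!σ b) := rfl

/-- The field of the graph in which `b` is merged into `a`: `b` stays behind as an isolated vertex
of field `0`, so that the vertex set does not change. -/
noncomputable def contractField (β γ : ℝ) (π : V → ℝ) (a b : V) : V → ℝ :=
  update (update π b 0) a (π a * π b * ((β - 1) / (γ - 1)))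

lemma update_loop_mem_Icc {β γ lam : ℝ} (hβ : 0 ≤ β) (hβγ : β ≤ γ) {π : V → ℝ}
    (hπ : ∀ u, π u ∈ Set.Icc 0 lam) (a : V) :
    ∀ u, update π a (π a * (β / γ)) u ∈ Set.Icc 0 lam := by
  refine forall_update_iff _ (fun _ x => x ∈ Set.Icc 0 lam) |>.2 ⟨⟨?_, ?_⟩, fun u _ => hπ u⟩
  · exact mul_nonneg (hπ a).1 (div_nonneg hβ (hβ.trans hβγ))
  · calc π a * (β / γ) ≤ π a * 1 :=
          mul_le_mul_of_nonneg_left (div_le_one_of_le₀ hβγ (hβ.trans hβγ)) (hπ a).1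
      _ ≤ lam := by simpa using (hπ a).2

lemma contractField_mem_Icc {β γ lam : ℝ} (hβ : 1 ≤ β) (hγ : 1 < γ)
    (hlam : lam * (β - 1) ≤ γ - 1) {π : V → ℝ} (hπ : ∀ u, π u ∈ Set.Icc 0 lam) (a b : V) :
    ∀ u, contractField β γ π a b u ∈ Set.Icc 0 lam := by
  have hr : 0 ≤ (β - 1) / (γ - 1) := div_nonneg (by linarith) (by linarith)
  have hlr : lam * ((β - 1) / (γ - 1)) ≤ 1 := by
    rwa [mul_div_assoc', div_le_one (by linarith)]
  have hlam0 : 0 ≤ lam := (hπ a).1.trans (hπ a).2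
  refine forall_update_iff _ (fun _ x => x ∈ Set.Icc 0 lam) |>.2 ⟨⟨?_, ?_⟩, fun u _ => ?_⟩
  · exact mul_nonneg (mul_nonneg (hπ a).1 (hπ b).1) hr
  · calc π a * π b * ((β - 1) / (γ - 1)) ≤ lam * lam * ((β - 1) / (γ - 1)) :=
          mul_le_mul_of_nonneg_right (mul_le_mul (hπ a).2 (hπ b).2 (hπ b).1 hlam0) hr
      _ = lam * (lam * ((β - 1) / (γ - 1))) := by ring
      _ ≤ lam := by simpa using mul_le_mul_of_nonneg_left hlr hlam0
  · exact forall_update_iff _ (fun _ x => x ∈ Set.Icc 0 lam) |>.2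
      ⟨⟨le_rfl, hlam0⟩, fun u _ => hπ u⟩ u

end Fields

section Weights

variable {V : Type*} [Fintype V]

def fieldWeight (π : V → ℝ) (σ : V → Bool) : ℝ :=
  ∏ u, if σ u = false then π u else 1

lemma fieldWeight_nonneg {π : V → ℝ} (hπ : ∀ u, 0 ≤ π u) (σ : V → Bool) :
    0 ≤ fieldWeight π σ :=
  prod_nonneg fun u _ => by split_ifs <;> simp [hπ u]

def weight (β γ : ℝ) (π : V → ℝ) (E : List (Sym2 V)) (σ : V → Bool) : ℝ :=
  (E.map (edgeWeight β γ σ)).prod * fieldWeight π σ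

lemma weight_cons (β γ : ℝ) (π : V → ℝ) (e : Sym2 V) (E : List (Sym2 V)) (σ : V → Bool) :
    weight β γ π (e :: E) σ = edgeWeight β γ σ e * weight β γ π E σ := by
  simp [weight, mul_assoc]

lemma weight_nonneg {β γ : ℝ} (hβ : 0 ≤ β) (hγ : 0 ≤ γ) {π : V → ℝ} (hπ : ∀ u, 0 ≤ π u)
    (E : List (Sym2 V)) (σ : V → Bool) : 0 ≤ weight β γ π E σ :=
  mul_nonneg (List.prod_nonneg fun _ he => by
    obtain ⟨e, -, rfl⟩ := List.mem_map.1 he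
    exact edgeWeight_nonneg hβ hγ σ e) (fieldWeight_nonneg hπ σ)

variable [DecidableEq V]

lemma sum_eq_sum_add_update_false (b : V) (f : (V → Bool) → ℝ) :
    ∑ σ, f σ = ∑ σ, if σ b = true then f σ + f (update σ b false) else 0 := by
  have hflip : ∑ σ, (if σ b = false then f σ else 0)
      = ∑ σ, if σ b = true then f (update σ b false) else 0 := by
    rw [← Equiv.sum_comp (flipAt b)]
    refine sum_congr rfl fun σ _ => ?_
    cases h : σ b <;> simp [flipAt_apply, h]
  calc ∑ σ, f σ = ∑ σ, ((if σ b = true then f σ else 0) + if σ b = false then f σ else 0) :=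
        sum_congr rfl fun σ _ => by cases σ b <;> simp
    _ = _ := by
      rw [sum_add_distrib, hflip, ← sum_add_distrib]
      exact sum_congr rfl fun σ _ => by cases σ b <;> simp

lemma sum_ite_eq_eq_sum_update {a b : V} (hab : a ≠ b) (g : (V → Bool) → ℝ) :
    (∑ σ, if σ a = σ b then g σ else 0)
      = ∑ σ, if σ b = true then g (update σ b (σ a)) else 0 := by
  rw [sum_eq_sum_add_update_false b]
  refine sum_congr rfl fun σ _ => ?_
  cases hb : σ b
  · simp
  · cases ha : σ a <;> simp [ha, update_of_ne hab, ← hb]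

lemma fieldWeight_update_false (π : V → ℝ) {σ : V → Bool} {b : V} (hb : σ b = true) :
    fieldWeight π (update σ b false) = π b * fieldWeight π σ := by
  rw [fieldWeight, fieldWeight, Fintype.prod_eq_mul_prod_compl b,
    Fintype.prod_eq_mul_prod_compl b]
  simp only [update_self, hb, Bool.true_eq_false, ↓reduceIte, one_mul]
  congr 1
  exact prod_congr rfl fun u hu => by rw [update_of_ne (by simpa using hu)]

def pinnedZ (β γ : ℝ) (π : V → ℝ) (E : List (Sym2 V)) (v : V) (s : Bool) : ℝ :=
  ∑ σ : V → Bool, if σ v = s then weight β γ π E σ else 0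

lemma pinnedZ_nonneg {β γ : ℝ} (hβ : 0 ≤ β) (hγ : 0 ≤ γ) {π : V → ℝ} (hπ : ∀ u, 0 ≤ π u)
    (E : List (Sym2 V)) (v : V) (s : Bool) : 0 ≤ pinnedZ β γ π E v s :=
  sum_nonneg fun σ _ => by split_ifs <;> simp [weight_nonneg hβ hγ hπ]

lemma sum_weight_eq_pinnedZ_add (β γ : ℝ) (π : V → ℝ) (E : List (Sym2 V)) (v : V) :
    ∑ σ, weight β γ π E σ = pinnedZ β γ π E v false + pinnedZ β γ π E v true := by
  rw [pinnedZ, pinnedZ, ← sum_add_distrib]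
  exact sum_congr rfl fun σ _ => by cases σ v <;> simp

lemma prod_compl_update_eq (π : V → ℝ) (σ : V → Bool) (a : V) (x : ℝ) :
    ∏ u ∈ {a}ᶜ, (if σ u = false then update π a x u else 1)
      = ∏ u ∈ {a}ᶜ, (if σ u = false then π u else 1) :=
  prod_congr rfl fun u hu => by rw [update_of_ne (by simpa using hu)]

lemma bondWeight_self_mul_fieldWeight {β γ : ℝ} (hγ : γ ≠ 0) (π : V → ℝ) (σ : V → Bool) (a : V) :
    bondWeight β γ (σ a) (σ a) * fieldWeight π σ
      = γ * fieldWeight (update π a (π a * (β / γ))) σ := by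
  rw [fieldWeight, fieldWeight, Fintype.prod_eq_mul_prod_compl a,
    Fintype.prod_eq_mul_prod_compl a, update_self, prod_compl_update_eq]
  cases σ a
  · simp only [bondWeight, ↓reduceIte]
    field_simp
  · simp [bondWeight]

lemma pinnedZ_nil_false (β γ : ℝ) (π : V → ℝ) (v : V) :
    pinnedZ β γ π [] v false = π v * pinnedZ β γ π [] v true := by
  rw [pinnedZ, sum_eq_sum_add_update_false v, pinnedZ, mul_sum]
  refine sum_congr rfl fun σ _ => ?_
  cases h : σ v
  · simp
  · simp [weight, fieldWeight_update_false π h]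

lemma weight_cons_loop {β γ : ℝ} (hγ : γ ≠ 0) (π : V → ℝ) (a : V) (E : List (Sym2 V))
    (σ : V → Bool) :
    weight β γ π (s(a, a) :: E) σ = γ * weight β γ (update π a (π a * (β / γ))) E σ := by
  rw [weight_cons, edgeWeight_mk, weight, weight, mul_left_comm,
    bondWeight_self_mul_fieldWeight hγ, mul_left_comm]

lemma pinnedZ_cons_loop {β γ : ℝ} (hγ : γ ≠ 0) (π : V → ℝ) (a : V) (E : List (Sym2 V)) (v : V)
    (s : Bool) :
    pinnedZ β γ π (s(a, a) :: E) v s = γ * pinnedZ β γ (update π a (π a * (β / γ))) E v s := by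
  simp only [pinnedZ, weight_cons_loop hγ, mul_sum, mul_ite, mul_zero]

lemma prod_univ_eq_mul_mul_prod_compl {a b : V} (hab : a ≠ b) (f : V → ℝ) :
    ∏ u, f u = f a * f b * ∏ u ∈ {a, b}ᶜ, f u := by
  rw [← prod_mul_prod_compl {a, b} f, prod_pair hab]

lemma fieldWeight_contract {β γ : ℝ} (hγ : γ ≠ 1) {a b : V} (hab : a ≠ b) (π : V → ℝ)
    {σ : V → Bool} (hb : σ b = true) :
    (bondWeight β γ (σ a) (σ a) - 1) * fieldWeight π (update σ b (σ a))
      = (γ - 1) * fieldWeight (contractField β γ π a b) σ := by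
  have hγ' : γ - 1 ≠ 0 := sub_ne_zero.2 hγ
  have hrest : ∏ u ∈ {a, b}ᶜ, (if update σ b (σ a) u = false then π u else 1)
      = ∏ u ∈ {a, b}ᶜ, (if σ u = false then contractField β γ π a b u else 1) :=
    prod_congr rfl fun u hu => by
      simp only [mem_compl, mem_insert, mem_singleton, not_or] at hu
      simp [contractField, update_of_ne hu.1, update_of_ne hu.2]
  rw [fieldWeight, fieldWeight, prod_univ_eq_mul_mul_prod_compl hab,
    prod_univ_eq_mul_mul_prod_compl hab, hrest]
  cases ha : σ a
  · simp [contractField, bondWeight, ha, hb, update_of_ne hab]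
    field_simp
  · simp [contractField, bondWeight, ha, hb, update_of_ne hab]

lemma weight_contract {β γ : ℝ} (hγ : γ ≠ 1) {a b : V} (hab : a ≠ b) (π : V → ℝ)
    (E : List (Sym2 V)) {σ : V → Bool} (hb : σ b = true) :
    (bondWeight β γ (σ a) (σ a) - 1) * weight β γ π E (update σ b (σ a))
      = (γ - 1) * weight β γ (contractField β γ π a b) (E.map (Sym2.map (update id b a))) σ := by
  have hedges : (E.map (Sym2.map (update id b a))).map (edgeWeight β γ σ)
      = E.map (edgeWeight β γ (update σ b (σ a))) := by
    simp only [List.map_map]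
    congr 1
    funext e
    simp [edgeWeight_map, comp_update]
  rw [weight, weight, hedges, mul_left_comm, fieldWeight_contract hγ hab π hb, mul_left_comm]

lemma weight_contractField_of_false {β γ : ℝ} {a b : V} (hab : a ≠ b) (π : V → ℝ)
    (E : List (Sym2 V)) {σ : V → Bool} (hb : σ b = false) :
    weight β γ (contractField β γ π a b) E σ = 0 := by
  rw [weight, fieldWeight,
    prod_eq_zero (mem_univ b) (by simp [contractField, hb, update_of_ne hab.symm]), mul_zero]

/-- The random cluster identity `Z(G) = Z(G - e) + (γ - 1) Z(G / e)`, for pinned partition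
functions. -/
lemma pinnedZ_cons_of_ne {β γ : ℝ} (hγ : γ ≠ 1) {a b v : V} (hab : a ≠ b) (hvb : v ≠ b)
    (π : V → ℝ) (E : List (Sym2 V)) (s : Bool) :
    pinnedZ β γ π (s(a, b) :: E) v s = pinnedZ β γ π E v s
      + (γ - 1) * pinnedZ β γ (contractField β γ π a b) (E.map (Sym2.map (update id b a))) v s := by
  have hsplit : pinnedZ β γ π (s(a, b) :: E) v s = pinnedZ β γ π E v s
      + ∑ σ, if σ a = σ b then
          (if σ v = s then (bondWeight β γ (σ a) (σ a) - 1) * weight β γ π E σ else 0) else 0 := by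
    rw [pinnedZ, pinnedZ, ← sum_add_distrib]
    refine sum_congr rfl fun σ _ => ?_
    rw [weight_cons, edgeWeight_mk, bondWeight_eq_one_add]
    split_ifs <;> ring
  rw [hsplit, sum_ite_eq_eq_sum_update hab]
  congr 1
  conv_rhs => rw [pinnedZ, sum_eq_sum_add_update_false b, mul_sum]
  refine sum_congr rfl fun σ _ => ?_
  cases hb : σ b
  · simp
  · simp [update_of_ne hvb, update_of_ne hab, weight_contract hγ hab π E hb,
      weight_contractField_of_false hab π _ (update_self b false σ)]

lemma pinnedZ_cons_false_le_of_ne {β γ lam : ℝ} (hγ : 1 < γ) {a b v : V} (hab : a ≠ b)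
    (hvb : v ≠ b) {π : V → ℝ} {E : List (Sym2 V)}
    (hE : pinnedZ β γ π E v false ≤ lam * pinnedZ β γ π E v true)
    (hE' : pinnedZ β γ (contractField β γ π a b) (E.map (Sym2.map (update id b a))) v false
      ≤ lam * pinnedZ β γ (contractField β γ π a b) (E.map (Sym2.map (update id b a))) v true) :
    pinnedZ β γ π (s(a, b) :: E) v false ≤ lam * pinnedZ β γ π (s(a, b) :: E) v true := by
  rw [pinnedZ_cons_of_ne hγ.ne' hab hvb, pinnedZ_cons_of_ne hγ.ne' hab hvb]
  calc _ ≤ lam * pinnedZ β γ π E v true + (γ - 1) * (lam * _) := by gcongr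
    _ = _ := by ring

theorem pinnedZ_false_le_mul_pinnedZ_true {β γ lam : ℝ} (hβ : 1 ≤ β) (hβγ : β ≤ γ) (hγ : 1 < γ)
    (hlam : lam * (β - 1) ≤ γ - 1) :
    ∀ (E : List (Sym2 V)) (π : V → ℝ), (∀ u, π u ∈ Set.Icc 0 lam) → ∀ v,
      pinnedZ β γ π E v false ≤ lam * pinnedZ β γ π E v true
  | [], π, hπ, v => by
    rw [pinnedZ_nil_false]
    exact mul_le_mul_of_nonneg_right (hπ v).2
      (pinnedZ_nonneg (by linarith) (by linarith) (fun u => (hπ u).1) _ _ _)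
  | e :: E, π, hπ, v => by
    induction e using Sym2.ind with | h a b => ?_
    have ih : ∀ E' : List (Sym2 V), E'.length = E.length → ∀ π' : V → ℝ,
        (∀ u, π' u ∈ Set.Icc 0 lam) → pinnedZ β γ π' E' v false ≤ lam * pinnedZ β γ π' E' v true :=
      -- the length equation is what discharges the termination goal
      fun E' _ π' hπ' => pinnedZ_false_le_mul_pinnedZ_true hβ hβγ hγ hlam E' π' hπ' v
    rcases eq_or_ne a b with rfl | hab
    · rw [pinnedZ_cons_loop (by positivity), pinnedZ_cons_loop (by positivity), mul_left_comm]
      exact mul_le_mul_of_nonneg_left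
        (ih E rfl _ (update_loop_mem_Icc (by linarith) hβγ hπ a)) (by linarith)
    rcases eq_or_ne v b with rfl | hvb
    · rw [Sym2.eq_swap]
      exact pinnedZ_cons_false_le_of_ne hγ hab.symm hab.symm (ih E rfl π hπ)
        (ih _ (List.length_map _) _ (contractField_mem_Icc hβ hγ hlam hπ v a))
    · exact pinnedZ_cons_false_le_of_ne hγ hab hvb (ih E rfl π hπ)
        (ih _ (List.length_map _) _ (contractField_mem_Icc hβ hγ hlam hπ a b))
termination_by E => E.length

lemma edgeWeight_eq_ite_mul_ite (β γ : ℝ) (σ : V → Bool) (e : Sym2 V) :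
    edgeWeight β γ σ e =
      (if ∀ u ∈ e, σ u = false then β else 1) * (if ∀ u ∈ e, σ u = true then γ else 1) := by
  induction e using Sym2.ind with
  | h a b => cases ha : σ a <;> cases hb : σ b <;> simp [edgeWeight_mk, bondWeight, ha, hb]

open scoped Classical in
lemma pow_mul_pow_mul_prod_eq_weight (G : SimpleGraph V) (β γ : ℝ) (π : V → ℝ) (σ : V → Bool) :
    β ^ #(univ.filter fun e : Sym2 V => e ∈ G.edgeSet ∧ ∀ u ∈ e, σ u = false) *
      γ ^ #(univ.filter fun e : Sym2 V => e ∈ G.edgeSet ∧ ∀ u ∈ e, σ u = true) *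
      ∏ u ∈ univ.filter fun u => σ u = false, π u
    = weight β γ π (univ.filter fun e : Sym2 V => e ∈ G.edgeSet).toList σ := by
  rw [weight, prod_map_toList, fieldWeight, ← prod_filter]
  simp only [edgeWeight_eq_ite_mul_ite, prod_mul_distrib]
  rw [← prod_filter (p := fun e : Sym2 V => ∀ u ∈ e, σ u = false),
    ← prod_filter (p := fun e : Sym2 V => ∀ u ∈ e, σ u = true), filter_filter, filter_filter,
    prod_const, prod_const]

end Weights

end TwoSpin

open scoped Classical in
theorem stmt_14 {V : Type*} [Fintype V] [DecidableEq V] (G : SimpleGraph V)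
    (β γ lam : ℝ) (hβ : 1 ≤ β) (hle : β ≤ γ) (h1 : 1 < β * γ) (hlam : 0 < lam)
    (hbound : β = 1 ∨ lam ≤ (γ - 1) / (β - 1))
    (π : V → ℝ) (hπ : ∀ v, 0 < π v ∧ π v ≤ lam) (v : V) :
    (∑ σ : V → Bool, if σ v = false then
        β ^ ((Finset.univ.filter fun e : Sym2 V =>
              e ∈ G.edgeSet ∧ ∀ u ∈ e, σ u = false).card) *
          γ ^ ((Finset.univ.filter fun e : Sym2 V =>
              e ∈ G.edgeSet ∧ ∀ u ∈ e, σ u = true).card) *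
          ∏ u ∈ Finset.univ.filter fun u => σ u = false, π u
      else 0) /
      (∑ σ : V → Bool,
        β ^ ((Finset.univ.filter fun e : Sym2 V =>
              e ∈ G.edgeSet ∧ ∀ u ∈ e, σ u = false).card) *
          γ ^ ((Finset.univ.filter fun e : Sym2 V =>
              e ∈ G.edgeSet ∧ ∀ u ∈ e, σ u = true).card) *
          ∏ u ∈ Finset.univ.filter fun u => σ u = false, π u) ≤
      lam / (lam + 1) := by
  have hγ : 1 < γ := by nlinarith
  have hlamβ : lam * (β - 1) ≤ γ - 1 := by
    rcases hbound with rfl | h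
    · linarith
    rcases hβ.eq_or_lt with rfl | hβ1
    · linarith
    · exact (le_div_iff₀ (sub_pos.2 hβ1)).1 h
  have hπ' : ∀ u, π u ∈ Set.Icc 0 lam := fun u => ⟨(hπ u).1.le, (hπ u).2⟩
  simp only [TwoSpin.pow_mul_pow_mul_prod_eq_weight, TwoSpin.sum_weight_eq_pinnedZ_add _ _ _ _ v]
  exact TwoSpin.div_add_le_div_add_one
    (TwoSpin.pinnedZ_nonneg (by linarith) (by linarith) (fun u => (hπ' u).1) _ _ _)
    (TwoSpin.pinnedZ_nonneg (by linarith) (by linarith) (fun u => (hπ' u).1) _ _ _) hlam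
    (TwoSpin.pinnedZ_false_le_mul_pinnedZ_true hβ hle hγ hlamβ _ π hπ' v)
end

section
/- For a 2-spin system with βγ > 1 and edge e = (v₁, v₂) of graph G, the random cluster identity Z(G) = Z(G⁻) + (γ−1)·Z(G⁺) holds, where G⁻ deletes e, and G⁺ contracts e with the merged vertex given external field λ_{v₁}·λ_{v₂}·(β−1)/(γ−1). -/
/-!
Split the weight of each configuration σ according to the colours of v₁ and v₂. If they differ,
e is not monochromatic and σ has the same weight in G and G⁻. If both are 1, e contributes
γ = 1 + (γ - 1); if both are 0, it contributes β = 1 + (γ - 1) · (β - 1)/(γ - 1), and the factor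
(β - 1)/(γ - 1) together with π(v₁)π(v₂) is exactly the field of the merged vertex. The summands
with the 1 give Z(G⁻), the others give (γ - 1) Z(G⁺), read as a sum over the σ with σ v₁ = σ v₂.
-/

open Finset

theorem SimpleGraph.card_filter_edgeSet_eq_deleteEdges_add {V : Type*} [Fintype V]
    {G : SimpleGraph V} {e : Sym2 V} (he : e ∈ G.edgeSet) (P : Sym2 V → Prop)
    [DecidablePred P] [DecidablePred (· ∈ G.edgeSet)]
    [DecidablePred (· ∈ (G.deleteEdges {e}).edgeSet)] :
    #{x | x ∈ G.edgeSet ∧ P x} =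
      #{x | x ∈ (G.deleteEdges {e}).edgeSet ∧ P x} + if P e then 1 else 0 := by
  classical
  simp only [SimpleGraph.edgeSet_deleteEdges, Set.mem_sdiff, Set.mem_singleton_iff]
  split_ifs with hP
  · rw [← card_insert_of_notMem (a := e) (by simp)]
    congr 1
    ext x
    by_cases hx : x = e <;> simp [hx, he, hP]
  · congr 1
    ext x
    by_cases hx : x = e <;> simp [hx, hP]

theorem Finset.prod_erase_ite_eq_mul_prod {ι M : Type*} [CommMonoid M] [DecidableEq ι]
    {s : Finset ι} {a b : ι} (ha : a ∈ s) (hb : b ∈ s) (hab : a ≠ b) (f : ι → M) (x : M) :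
    ∏ u ∈ s.erase b, (if u = a then f a * f b * x else f u) = x * ∏ u ∈ s, f u := by
  have ha' : a ∈ s.erase b := mem_erase.mpr ⟨hab, ha⟩
  rw [← mul_prod_erase _ _ ha', if_pos rfl, ← mul_prod_erase s f hb, ← mul_prod_erase _ f ha',
    prod_congr rfl fun u hu => if_neg (ne_of_mem_erase hu)]
  ac_rfl

open scoped Classical in
theorem stmt_15_general {V : Type*} [Fintype V] [DecidableEq V] (G : SimpleGraph V)
    (β γ : ℝ) (hγ1 : γ ≠ 1)
    (π : V → ℝ) (v₁ v₂ : V) (hadj : G.Adj v₁ v₂) :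
    let Z : SimpleGraph V → (V → ℝ) → ℝ := fun H p =>
      ∑ σ : V → Bool,
        β ^ ((Finset.univ.filter fun e : Sym2 V =>
              e ∈ H.edgeSet ∧ ∀ u ∈ e, σ u = false).card) *
          γ ^ ((Finset.univ.filter fun e : Sym2 V =>
              e ∈ H.edgeSet ∧ ∀ u ∈ e, σ u = true).card) *
          ∏ u ∈ Finset.univ.filter fun u => σ u = false, p u
    let Gminus : SimpleGraph V := G.deleteEdges {s(v₁, v₂)}
    let Zplus : ℝ :=
      ∑ σ ∈ Finset.univ.filter fun σ : V → Bool => σ v₁ = σ v₂,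
        β ^ ((Finset.univ.filter fun e : Sym2 V =>
              e ∈ Gminus.edgeSet ∧ ∀ u ∈ e, σ u = false).card) *
          γ ^ ((Finset.univ.filter fun e : Sym2 V =>
              e ∈ Gminus.edgeSet ∧ ∀ u ∈ e, σ u = true).card) *
          ∏ u ∈ Finset.univ.filter fun u => σ u = false ∧ u ≠ v₂,
            (if u = v₁ then π v₁ * π v₂ * (β - 1) / (γ - 1) else π u)
    Z G π = Z Gminus π + (γ - 1) * Zplus := by
  intro Z Gminus Zplus
  simp only [Z, Zplus, Gminus, sum_filter, mul_sum, ← sum_add_distrib]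
  refine sum_congr rfl fun σ _ => ?_
  have hfilter : univ.filter (fun u => σ u = false ∧ u ≠ v₂) =
      (univ.filter fun u => σ u = false).erase v₂ := by
    rw [← filter_ne', filter_filter]
  rw [SimpleGraph.card_filter_edgeSet_eq_deleteEdges_add (G.mem_edgeSet.mpr hadj),
    SimpleGraph.card_filter_edgeSet_eq_deleteEdges_add (G.mem_edgeSet.mpr hadj), hfilter]
  -- `Z Gminus π`, `Zplus` and the rewrite above decide membership in `Gminus.edgeSet` through three
  -- different instances; unfolding `edgeSet_deleteEdges` makes the three filters syntactically equal.
  simp only [SimpleGraph.edgeSet_deleteEdges, Sym2.mem_iff, forall_eq_or_imp, forall_eq, pow_add]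
  cases h₁ : σ v₁ <;> cases h₂ : σ v₂ <;>
    simp only [Bool.false_eq_true, Bool.true_eq_false, and_self, and_true, and_false, ↓reduceIte,
      pow_zero, pow_one, mul_one, mul_zero, add_zero]
  · rw [mul_div_assoc, prod_erase_ite_eq_mul_prod (by simpa using h₁) (by simpa using h₂) hadj.ne]
    field_simp [sub_ne_zero.mpr hγ1]
    ring
  · rw [erase_eq_of_notMem (by simp [h₂]), prod_ite_of_false (by rintro u hu rfl; simp [h₁] at hu)]
    ring

open scoped Classical in
theorem stmt_15 {V : Type*} [Fintype V] [DecidableEq V] (G : SimpleGraph V)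
    (β γ : ℝ) (hβ : 0 < β) (hγ : 0 < γ) (hγ1 : γ ≠ 1) (h1 : 1 < β * γ)
    (π : V → ℝ) (v₁ v₂ : V) (hadj : G.Adj v₁ v₂) :
    let Z : SimpleGraph V → (V → ℝ) → ℝ := fun H p =>
      ∑ σ : V → Bool,
        β ^ ((Finset.univ.filter fun e : Sym2 V =>
              e ∈ H.edgeSet ∧ ∀ u ∈ e, σ u = false).card) *
          γ ^ ((Finset.univ.filter fun e : Sym2 V =>
              e ∈ H.edgeSet ∧ ∀ u ∈ e, σ u = true).card) *
          ∏ u ∈ Finset.univ.filter fun u => σ u = false, p u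
    let Gminus : SimpleGraph V := G.deleteEdges {s(v₁, v₂)}
    let Zplus : ℝ :=
      ∑ σ ∈ Finset.univ.filter fun σ : V → Bool => σ v₁ = σ v₂,
        β ^ ((Finset.univ.filter fun e : Sym2 V =>
              e ∈ Gminus.edgeSet ∧ ∀ u ∈ e, σ u = false).card) *
          γ ^ ((Finset.univ.filter fun e : Sym2 V =>
              e ∈ Gminus.edgeSet ∧ ∀ u ∈ e, σ u = true).card) *
          ∏ u ∈ Finset.univ.filter fun u => σ u = false ∧ u ≠ v₂,
            (if u = v₁ then π v₁ * π v₂ * (β - 1) / (γ - 1) else π u)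
    Z G π = Z Gminus π + (γ - 1) * Zplus :=
  stmt_15_general G β γ hγ1 π v₁ v₂ hadj
end

section
/- For the multivariate tree recursion F_d(x₁,…,x_d) = λ∏ᵢ(βxᵢ+1)/(xᵢ+γ) with βγ > 1, the logarithmic-potential contraction quantity equals (1/F_d)·Σᵢ (∂F_d/∂xᵢ)·xᵢ = Σᵢ (βγ−1)xᵢ/((βxᵢ+1)(xᵢ+γ)), and hence is at most d·(√(βγ)−1)/(√(βγ)+1) for all positive x₁,…,x_d. In particular it is strictly less than 1 when d < Δ_c. -/
theorem stmt_16 (β γ lam : ℝ) (hβ : 0 < β) (hγ : 0 < γ) (hlam : 0 < lam)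
    (h1 : 1 < β * γ) (d : ℕ) (x : Fin d → ℝ) (hx : ∀ i, 0 < x i) :
    (1 / (lam * ∏ i, (β * x i + 1) / (x i + γ))) *
        ∑ i, deriv (fun t : ℝ => lam * ∏ j, (β * Function.update x i t j + 1) /
            (Function.update x i t j + γ)) (x i) * x i =
      ∑ i, (β * γ - 1) * x i / ((β * x i + 1) * (x i + γ)) ∧
    (∑ i, (β * γ - 1) * x i / ((β * x i + 1) * (x i + γ)) ≤
      d * ((Real.sqrt (β * γ) - 1) / (Real.sqrt (β * γ) + 1))) ∧
    ((d : ℝ) < (Real.sqrt (β * γ) + 1) / (Real.sqrt (β * γ) - 1) →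
      ∑ i, (β * γ - 1) * x i / ((β * x i + 1) * (x i + γ)) < 1) := by
  set g : ℝ → ℝ := fun t => (β * t + 1) / (t + γ) with hg
  have hgpos : ∀ t : ℝ, 0 < t → 0 < g t := by
    intro t ht
    exact div_pos (by nlinarith [mul_pos hβ ht]) (by linarith)
  set s := Real.sqrt (β * γ) with hs
  have hbg : (0:ℝ) < β * γ := by positivity
  have hs2 : s * s = β * γ := Real.mul_self_sqrt hbg.le
  have hs1 : 1 < s := by
    have := Real.sqrt_lt_sqrt (by norm_num : (0:ℝ) ≤ 1) h1
    simpa using this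
  -- per-term bound
  have hterm : ∀ i, (β * γ - 1) * x i / ((β * x i + 1) * (x i + γ)) ≤ (s - 1) / (s + 1) := by
    intro i
    have hxi := hx i
    have hn1 : 0 < β * x i + 1 := by nlinarith [mul_pos hβ hxi]
    have hn2 : 0 < x i + γ := by linarith
    have hden : 0 < (β * x i + 1) * (x i + γ) := mul_pos hn1 hn2
    rw [div_le_div_iff₀ hden (by linarith)]
    have hb2 : Real.sqrt β ^ 2 = β := Real.sq_sqrt hβ.le
    have hc2 : Real.sqrt γ ^ 2 = γ := Real.sq_sqrt hγ.le
    have hbc : Real.sqrt β * Real.sqrt γ = s := (Real.sqrt_mul hβ.le γ).symm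
    have hb2x : Real.sqrt β ^ 2 * x i ^ 2 = β * x i ^ 2 := by rw [hb2]
    have hbcx : Real.sqrt β * Real.sqrt γ * x i = s * x i := by rw [hbc]
    have hkey : 2 * s * x i ≤ β * x i ^ 2 + γ := by
      nlinarith [sq_nonneg (Real.sqrt β * x i - Real.sqrt γ), hb2x, hbcx, hc2]
    have hkey2 : 0 ≤ (s - 1) * (β * x i ^ 2 + γ - 2 * s * x i) :=
      mul_nonneg (by linarith) (by linarith)
    have hs2x : s * s * x i = β * γ * x i := by rw [hs2]
    nlinarith [hkey2, hs2x]
  have hsum_le : ∑ i, (β * γ - 1) * x i / ((β * x i + 1) * (x i + γ)) ≤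
      d * ((s - 1) / (s + 1)) := by
    calc ∑ i, (β * γ - 1) * x i / ((β * x i + 1) * (x i + γ))
        ≤ ∑ _i : Fin d, (s - 1) / (s + 1) := Finset.sum_le_sum fun i _ => hterm i
      _ = d * ((s - 1) / (s + 1)) := by
          rw [Finset.sum_const, Finset.card_univ, Fintype.card_fin, nsmul_eq_mul]
  refine ⟨?_, hsum_le, ?_⟩
  · -- derivative identity
    have hF : ∀ i : Fin d, (0:ℝ) < g (x i) := fun i => hgpos _ (hx i)
    have hderiv : ∀ i : Fin d,
        deriv (fun t : ℝ => lam * ∏ j, (β * Function.update x i t j + 1) /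
            (Function.update x i t j + γ)) (x i)
          = lam * (∏ j ∈ Finset.univ.erase i, g (x j)) * ((β * γ - 1) / (x i + γ) ^ 2) := by
      intro i
      have hfun : (fun t : ℝ => lam * ∏ j, (β * Function.update x i t j + 1) /
            (Function.update x i t j + γ))
          = fun t => lam * (g t * ∏ j ∈ Finset.univ.erase i, g (x j)) := by
        funext t
        congr 1
        have h : (fun j => (β * Function.update x i t j + 1) / (Function.update x i t j + γ))
            = Function.update (fun j => g (x j)) i (g t) := by
          funext j
          rcases eq_or_ne j i with rfl | h
          · simp [hg]
          · simp [Function.update_of_ne h, hg]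
        rw [h, Finset.prod_update_of_mem (Finset.mem_univ i)]
        congr 1
        rw [Finset.erase_eq]
      rw [hfun]
      have hne : x i + γ ≠ 0 := by nlinarith [hx i]
      have hd : HasDerivAt g ((β * γ - 1) / (x i + γ) ^ 2) (x i) := by
        have h := ((hasDerivAt_id (x i)).const_mul β |>.add_const 1).div
          ((hasDerivAt_id (x i)).add_const γ) hne
        exact h.congr_deriv (by simp only [id]; ring :
          (β * 1 * (id (x i) + γ) - (β * id (x i) + 1) * 1) / (id (x i) + γ) ^ 2 =
            (β * γ - 1) / (x i + γ) ^ 2)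
      have := ((hd.mul_const (∏ j ∈ Finset.univ.erase i, g (x j))).const_mul lam).deriv
      rw [this]; ring
    rw [Finset.mul_sum]
    apply Finset.sum_congr rfl
    intro i _
    rw [hderiv i]
    have hxi := hx i
    have hsplit : ∏ j, g (x j) = g (x i) * ∏ j ∈ Finset.univ.erase i, g (x j) :=
      (Finset.mul_prod_erase Finset.univ _ (Finset.mem_univ i)).symm
    have hPpos : (0:ℝ) < ∏ j ∈ Finset.univ.erase i, g (x j) :=
      Finset.prod_pos fun j _ => hF j
    have hne1 : x i + γ ≠ 0 := by nlinarith
    have hne2 : β * x i + 1 ≠ 0 := by nlinarith [mul_pos hβ hxi]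
    have hthis : (∏ i, (β * x i + 1) / (x i + γ)) = ∏ j, g (x j) := rfl
    rw [hthis, hsplit]
    set P := ∏ j ∈ Finset.univ.erase i, g (x j) with hP
    have hgxi : g (x i) = (β * x i + 1) / (x i + γ) := rfl
    rw [hgxi]
    field_simp
  · intro hd
    have hcpos : 0 < (s - 1) / (s + 1) := div_pos (by linarith) (by linarith)
    have h2 : (d : ℝ) * ((s - 1) / (s + 1)) < ((s + 1) / (s - 1)) * ((s - 1) / (s + 1)) :=
      mul_lt_mul_of_pos_right hd hcpos
    have h3 : ((s + 1) / (s - 1)) * ((s - 1) / (s + 1)) = 1 := by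
      rw [div_mul_div_comm, mul_comm (s+1)]
      exact div_self (by nlinarith)
    rw [h3] at h2
    exact lt_of_le_of_lt hsum_le h2
end

section
/- Let βγ > 1, β ≤ γ, λ < λ_c, and consider any finite rooted tree with all fields ≤ λ and no pinned vertices. Then the ratio R_v = p_v/(1−p_v) at the root, computed by the recursion R_v = λ_v·∏ᵢ(βR_{vᵢ}+1)/(R_{vᵢ}+γ) over children vᵢ, satisfies R_v ∈ (0, λ]. -/
/-- A finite rooted tree in which every vertex carries an external field. -/
inductive FieldTree : Type
  | node : ℝ → List FieldTree → FieldTree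

/-- The ratio `R_v = p_v/(1-p_v)` at the root, computed by the tree recursion
`R_v = λ_v · ∏ᵢ (β R_{vᵢ} + 1)/(R_{vᵢ} + γ)` over the children. -/
noncomputable def FieldTree.ratio (β γ : ℝ) : FieldTree → ℝ
  | .node lv cs =>
      lv * (cs.attach.map fun c => (β * c.1.ratio β γ + 1) / (c.1.ratio β γ + γ)).prod
  decreasing_by
    have := List.sizeOf_lt_of_mem c.2
    simp at *
    omega

/-- All fields in the tree lie in `(0, lam]`. -/
def FieldTree.fieldsLE (lam : ℝ) : FieldTree → Prop
  | .node lv cs => (0 < lv ∧ lv ≤ lam) ∧ ∀ c ∈ cs, c.fieldsLE lam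

/-!
Each factor `(β x + 1)/(x + γ)` is positive, and it is at most `1` iff `(β - 1) x ≤ γ - 1`.
This is automatic for `β ≤ 1`; for `β > 1` it holds for `x ≤ λ_c` because
`λ_c ≤ (γ - 1)/(β - 1)`. With `s = √(βγ)`, `u = √(γ/β)`, so that `β = s/u` and `γ = s u`,
that bound reads `u^((s+1)/(s-1)) ≤ (s u - 1)/(s - u)` for `1 ≤ u < s`. Taking logarithms, both
sides agree at `u = 1` and the difference has derivative
`s (s+1) (u-1)² / ((s-1) u (s u-1) (s-u)) ≥ 0`.
Induction on the tree then keeps the root ratio in `(0, λ]`: it is a field `≤ λ` times a product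
of factors in `(0, 1]`.
-/

open Real Set

noncomputable def criticalField (β γ : ℝ) : ℝ :=
  (γ / β) ^ (√(β * γ) / (√(β * γ) - 1))

lemma monotoneOn_log_sub_log_sub_mul_log {s : ℝ} (hs : 1 < s) :
    MonotoneOn (fun x => log (s * x - 1) - log (s - x) - (s + 1) / (s - 1) * log x)
      (Ico 1 s) := by
  have hderiv : ∀ x ∈ Ico 1 s, HasDerivAt
      (fun x => log (s * x - 1) - log (s - x) - (s + 1) / (s - 1) * log x)
      (s * (s + 1) * (x - 1) ^ 2 / ((s - 1) * x * (s * x - 1) * (s - x))) x := by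
    rintro x ⟨hx1, hxs⟩
    have hx : 0 < x := by linarith
    have hsx : 0 < s * x - 1 := by nlinarith
    have hd1 : HasDerivAt (fun y => log (s * y - 1)) (s / (s * x - 1)) x := by
      simpa using (((hasDerivAt_id' x).const_mul s).sub_const 1).log hsx.ne'
    have hd2 : HasDerivAt (fun y => log (s - y)) (-1 / (s - x)) x := by
      simpa using ((hasDerivAt_id' x).const_sub s).log (sub_pos.2 hxs).ne'
    refine ((hd1.sub hd2).sub
      ((hasDerivAt_log hx.ne').const_mul ((s + 1) / (s - 1)))).congr_deriv ?_
    have : s - 1 ≠ 0 := by linarith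
    have : s - x ≠ 0 := by linarith
    field_simp
    ring
  refine monotoneOn_of_deriv_nonneg (convex_Ico 1 s)
    (fun x hx => (hderiv x hx).continuousAt.continuousWithinAt)
    (fun x hx => (hderiv x (interior_subset hx)).differentiableAt.differentiableWithinAt) ?_
  rw [interior_Ico]
  rintro x ⟨hx1, hxs⟩
  rw [(hderiv x ⟨hx1.le, hxs⟩).deriv]
  have hsx : 0 < s * x - 1 := by nlinarith
  apply div_nonneg (by positivity)
  exact (mul_pos (mul_pos (mul_pos (by linarith) (by linarith)) hsx) (by linarith)).le

lemma mul_log_le_log_sub_log {s u : ℝ} (hs : 1 < s) (hu : 1 ≤ u) (hus : u < s) :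
    (s + 1) / (s - 1) * log u ≤ log (s * u - 1) - log (s - u) := by
  have h := monotoneOn_log_sub_log_sub_mul_log hs ⟨le_rfl, hs⟩ ⟨hu, hus⟩ hu
  simp only [mul_one, log_one, mul_zero, sub_self] at h
  linarith

lemma criticalField_le_sub_one_div_sub_one {β γ : ℝ} (hβ : 1 < β) (hle : β ≤ γ) :
    criticalField β γ ≤ (γ - 1) / (β - 1) := by
  rw [criticalField]
  have hγ : 0 < γ := by linarith
  set s := √(β * γ)
  set u := √(γ / β)
  have hu : 0 < u := sqrt_pos.2 (by positivity)
  have hs : 0 < s := sqrt_pos.2 (by positivity)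
  have hsu : s * u = γ := by
    rw [← sqrt_mul (by positivity), show β * γ * (γ / β) = γ ^ 2 by field_simp]
    exact sqrt_sq hγ.le
  have hβu : β * u = s := by
    have : u ^ 2 = γ / β := sq_sqrt (by positivity)
    have : s ^ 2 = β * γ := sq_sqrt (by positivity)
    nlinarith
  have hu1 : 1 ≤ u := one_le_sqrt.2 ((one_le_div (by linarith)).2 hle)
  have hus : u < s := by nlinarith
  have hs1 : 1 < s := by linarith
  have hsu1 : 0 < s * u - 1 := by nlinarith
  have hratio : (γ - 1) / (β - 1) = u * (s * u - 1) / (s - u) := by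
    rw [div_eq_div_iff (by linarith) (by linarith), ← hsu]
    linear_combination (1 - s * u) * hβu
  have hbase : γ / β = u ^ 2 := (sq_sqrt (by positivity)).symm
  rw [hratio, hbase, rpow_def_of_pos (by positivity),
    ← le_log_iff_exp_le (by positivity), log_div (by positivity) (by linarith),
    log_mul hu.ne' hsu1.ne', log_pow]
  have hexponent : 2 * log u * (s / (s - 1)) = log u + (s + 1) / (s - 1) * log u := by
    have : s - 1 ≠ 0 := by linarith
    field_simp
    ring
  push_cast
  rw [hexponent]
  linarith [mul_log_le_log_sub_log hs1 hu1 hus]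

lemma div_le_one_of_le_criticalField {β γ x : ℝ} (hβ : 0 < β) (hβγ : 1 < β * γ) (hle : β ≤ γ)
    (hx : 0 ≤ x) (hxc : x ≤ criticalField β γ) : (β * x + 1) / (x + γ) ≤ 1 := by
  have hγ : 1 < γ := by nlinarith
  rw [div_le_one (by linarith)]
  rcases le_or_gt β 1 with hβ1 | hβ1
  · nlinarith
  · have := hxc.trans (criticalField_le_sub_one_div_sub_one hβ1 hle)
    rw [le_div_iff₀ (by linarith)] at this
    linarith

theorem FieldTree.ratio_mem_Ioc {β γ lam : ℝ}
    (hfac : ∀ x ∈ Ioc 0 lam, (β * x + 1) / (x + γ) ∈ Ioc 0 1) :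
    ∀ T : FieldTree, T.fieldsLE lam → T.ratio β γ ∈ Ioc 0 lam
  | .node lv cs, hT => by
    obtain ⟨⟨hlv, hlvle⟩, hcs⟩ := (FieldTree.fieldsLE.eq_1 lam lv cs).mp hT
    have hfac_mem : ∀ c ∈ cs.attach,
        (β * c.1.ratio β γ + 1) / (c.1.ratio β γ + γ) ∈ Ioc 0 1 := fun c _ =>
      hfac _ (FieldTree.ratio_mem_Ioc hfac c.1 (hcs c.1 c.2))
    rw [FieldTree.ratio]
    refine ⟨mul_pos hlv (List.prod_pos ?_), ?_⟩
    · simp only [List.mem_map]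
      rintro _ ⟨c, hc, rfl⟩
      exact (hfac_mem c hc).1
    · calc _ ≤ lv * (cs.attach.map fun _ => (1 : ℝ)).prod :=
            mul_le_mul_of_nonneg_left (List.prod_map_le_prod_map₀ _ _
              (fun c hc => (hfac_mem c hc).1.le) (fun c hc => (hfac_mem c hc).2)) hlv.le
        _ ≤ lam := by simpa using hlvle
  termination_by T => T
  decreasing_by
    have := List.sizeOf_lt_of_mem c.2
    simp at *
    omega

theorem stmt_17_general (β γ lam : ℝ) (hβ : 0 < β) (h1 : 1 < β * γ) (hle : β ≤ γ)
    (hlamc : lam < (γ / β) ^ (Real.sqrt (β * γ) / (Real.sqrt (β * γ) - 1)))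
    (T : FieldTree) (hT : T.fieldsLE lam) :
    0 < T.ratio β γ ∧ T.ratio β γ ≤ lam := by
  have hγ : 0 < γ := by nlinarith
  refine FieldTree.ratio_mem_Ioc (fun x ⟨hx, hxl⟩ => ⟨?_, ?_⟩) T hT
  · positivity
  · exact div_le_one_of_le_criticalField hβ h1 hle hx.le (hxl.trans hlamc.le)

theorem stmt_17 (β γ lam : ℝ) (hβ : 0 < β) (hγ : 0 < γ) (h1 : 1 < β * γ) (hle : β ≤ γ)
    (hlam : 0 < lam)
    (hlamc : lam < (γ / β) ^ (Real.sqrt (β * γ) / (Real.sqrt (β * γ) - 1)))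
    (T : FieldTree) (hT : T.fieldsLE lam) :
    0 < T.ratio β γ ∧ T.ratio β γ ≤ lam :=
  stmt_17_general β γ lam hβ h1 hle hlamc T hT
end

section
/- For β = 0.6, γ = 2, and t = ((√(βγ)+1)/(√(βγ)−1))·(log√(γ/β))/(√(γ/β)+1) − log(1 + √(β/γ)), the function ρ(x) = (1 + βγ − βe^{−x} − γe^{x})·(log(1 + (β − e^x)/(γe^x − 1)) + t) is strictly concave on (−log γ, log β); indeed ρ''(x) < −5 on this interval. -/
/-!
Put `u = eˣ`, so that `1/γ < u < β` on the interval. The function is a product `ρ = A · (L + t)`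
with `A = 1 + βγ - βe⁻ˣ - γeˣ` and `L = log (((γ - 1)u + β - 1) / (γu - 1)) ≥ 0`, hence
`ρ'' = A''(L + t) + 2A'L' + AL''`. For `β = 0.6, γ = 2` one has `A'' = -(0.6/u + 2u) < -2`, and
`2A'L' + AL''` is `7/5` minus a rational function of `u` whose numerator, a quartic, is
nonnegative on `[1/2, 3/5]`. Elementary bounds on square roots and logarithms give `t ≥ 4`, so
`ρ'' < -8 + 7/5 < -5`.
-/

open Real Set Topology

namespace ConcaveRho

theorem hasDerivAt_deriv_mul {f f' f'' g g' g'' : ℝ → ℝ} {s : Set ℝ} (hs : IsOpen s)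
    (hf : ∀ y ∈ s, HasDerivAt f (f' y) y) (hf' : ∀ y ∈ s, HasDerivAt f' (f'' y) y)
    (hg : ∀ y ∈ s, HasDerivAt g (g' y) y) (hg' : ∀ y ∈ s, HasDerivAt g' (g'' y) y)
    {x : ℝ} (hx : x ∈ s) :
    HasDerivAt (deriv fun y => f y * g y) (f'' x * g x + 2 * (f' x * g' x) + f x * g'' x) x := by
  have hderiv : deriv (fun y => f y * g y) =ᶠ[𝓝 x] fun y => f' y * g y + f y * g' y := by
    filter_upwards [hs.mem_nhds hx] with y hy using ((hf y hy).mul (hg y hy)).deriv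
  refine HasDerivAt.congr_of_eventuallyEq ?_ hderiv
  refine (((hf' x hx).mul (hg x hx)).add ((hf x hx).mul (hg' x hx))).congr_deriv ?_
  ring

noncomputable def prefactor (β γ x : ℝ) : ℝ := 1 + β * γ - β * exp (-x) - γ * exp x

noncomputable def logFactor (β γ x : ℝ) : ℝ := log (1 + (β - exp x) / (γ * exp x - 1))

noncomputable def logFactorDeriv (β γ x : ℝ) : ℝ :=
  (1 - β * γ) * exp x / (((γ - 1) * exp x + β - 1) * (γ * exp x - 1))

noncomputable def logFactorDeriv2 (β γ x : ℝ) : ℝ :=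
  (1 - β * γ) * exp x * (1 - β - γ * (γ - 1) * exp x ^ 2) /
    (((γ - 1) * exp x + β - 1) * (γ * exp x - 1)) ^ 2

noncomputable def rho (β γ t x : ℝ) : ℝ := prefactor β γ x * (logFactor β γ x + t)

variable {β γ : ℝ}

theorem hasDerivAt_prefactor (x : ℝ) :
    HasDerivAt (prefactor β γ) (β * exp (-x) - γ * exp x) x := by
  refine ((((hasDerivAt_neg x).exp.const_mul β).const_sub (1 + β * γ)).sub
    ((hasDerivAt_exp x).const_mul γ)).congr_deriv ?_
  ring

theorem hasDerivAt_prefactorDeriv (x : ℝ) :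
    HasDerivAt (fun y => β * exp (-y) - γ * exp y) (-β * exp (-x) - γ * exp x) x := by
  refine (((hasDerivAt_neg x).exp.const_mul β).sub
    ((hasDerivAt_exp x).const_mul γ)).congr_deriv ?_
  ring

theorem hasDerivAt_logFactor {x : ℝ} (h₁ : γ * exp x - 1 ≠ 0)
    (h₂ : (γ - 1) * exp x + β - 1 ≠ 0) :
    HasDerivAt (logFactor β γ) (logFactorDeriv β γ x) x := by
  have harg : 1 + (β - exp x) / (γ * exp x - 1) = ((γ - 1) * exp x + β - 1) / (γ * exp x - 1) := by
    rw [eq_div_iff h₁, add_mul, div_mul_cancel₀ _ h₁]; ring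
  refine (((((hasDerivAt_exp x).const_sub β).div
    (((hasDerivAt_exp x).const_mul γ).sub_const 1) h₁).const_add 1).log
    (by simp only [Pi.div_apply]; rw [harg]; exact div_ne_zero h₂ h₁)).congr_deriv ?_
  simp only [Pi.div_apply]
  rw [harg, logFactorDeriv]
  field_simp
  ring

theorem hasDerivAt_logFactorDeriv {x : ℝ} (h₁ : γ * exp x - 1 ≠ 0)
    (h₂ : (γ - 1) * exp x + β - 1 ≠ 0) :
    HasDerivAt (logFactorDeriv β γ) (logFactorDeriv2 β γ x) x := by
  have hN := (hasDerivAt_exp x).const_mul (1 - β * γ)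
  have hD := ((((hasDerivAt_exp x).const_mul (γ - 1)).add_const β).sub_const 1).mul
    (((hasDerivAt_exp x).const_mul γ).sub_const 1)
  refine (hN.div hD ?_).congr_deriv ?_
  · exact mul_ne_zero h₂ h₁
  · simp only [Pi.mul_apply]
    rw [logFactorDeriv2]
    field_simp
    ring

theorem exp_mem_Ioo (hβ : 0 < β) (hγ : 0 < γ) {x : ℝ} (hx : x ∈ Ioo (-log γ) (log β)) :
    exp x ∈ Ioo γ⁻¹ β :=
  ⟨by simpa [exp_neg, exp_log hγ] using exp_lt_exp.2 hx.1,
    by simpa [exp_log hβ] using exp_lt_exp.2 hx.2⟩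

theorem denominators_pos (hβ : 0 < β) (hγ : 0 < γ) {x : ℝ} (hx : x ∈ Ioo (-log γ) (log β)) :
    0 < γ * exp x - 1 ∧ 0 < (γ - 1) * exp x + β - 1 := by
  obtain ⟨hlow, hupp⟩ := exp_mem_Ioo hβ hγ hx
  have : 1 < γ * exp x := by simpa [hγ.ne'] using mul_lt_mul_of_pos_left hlow hγ
  constructor <;> linarith

theorem logFactor_nonneg (hβ : 0 < β) (hγ : 0 < γ) {x : ℝ} (hx : x ∈ Ioo (-log γ) (log β)) :
    0 ≤ logFactor β γ x := by
  have hden := (denominators_pos hβ hγ hx).1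
  have hnum : 0 ≤ β - exp x := by linarith [(exp_mem_Ioo hβ hγ hx).2]
  exact log_nonneg (le_add_of_nonneg_right (div_nonneg hnum hden.le))

theorem continuousOn_rho (hβ : 0 < β) (hγ : 0 < γ) (t : ℝ) :
    ContinuousOn (rho β γ t) (Ioo (-log γ) (log β)) := fun x hx =>
  have hden := denominators_pos hβ hγ hx
  ((hasDerivAt_prefactor x).continuousAt.mul
    ((hasDerivAt_logFactor hden.1.ne' hden.2.ne').continuousAt.add
      continuousAt_const)).continuousWithinAt

theorem hasDerivAt_deriv_rho (hβ : 0 < β) (hγ : 0 < γ) (t : ℝ) {x : ℝ}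
    (hx : x ∈ Ioo (-log γ) (log β)) :
    HasDerivAt (deriv (rho β γ t)) ((-β * exp (-x) - γ * exp x) * (logFactor β γ x + t) +
      2 * ((β * exp (-x) - γ * exp x) * logFactorDeriv β γ x) +
      prefactor β γ x * logFactorDeriv2 β γ x) x := by
  have hden := fun y (hy : y ∈ Ioo (-log γ) (log β)) => denominators_pos hβ hγ hy
  exact hasDerivAt_deriv_mul (f := prefactor β γ) (g := fun y => logFactor β γ y + t)
    isOpen_Ioo (fun y _ => hasDerivAt_prefactor y) (fun y _ => hasDerivAt_prefactorDeriv y)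
    (fun y hy => (hasDerivAt_logFactor (hden y hy).1.ne' (hden y hy).2.ne').add_const t)
    (fun y hy => hasDerivAt_logFactorDeriv (hden y hy).1.ne' (hden y hy).2.ne') hx

theorem cross_terms_le {x : ℝ} (h₁ : 2⁻¹ < exp x) (h₂ : exp x < 0.6) :
    2 * ((0.6 * exp (-x) - 2 * exp x) * logFactorDeriv 0.6 2 x) +
      prefactor 0.6 2 x * logFactorDeriv2 0.6 2 x ≤ 7 / 5 := by
  rw [prefactor, logFactorDeriv, logFactorDeriv2, exp_neg]
  set u := exp x
  rw [show (2 - 1) * u + 0.6 - 1 = u - 2 / 5 by ring]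
  have ha : 2 * u - 1 ≠ 0 := by linarith
  have hb : u * 5 - 2 ≠ 0 := by linarith
  have hu₁ : 0 ≤ u - 1 / 2 := by linarith
  have hu₂ : 0 ≤ 3 / 5 - u := by linarith
  have hP : 0 ≤ 24/5 * u^4 - 238/25 * u^3 + 877/125 * u^2 - 284/125 * u + 34/125 := by
    nlinarith [mul_nonneg hu₁ (mul_nonneg (mul_nonneg hu₂ hu₂) hu₂),
      mul_nonneg (mul_nonneg hu₁ hu₁) (mul_nonneg hu₂ hu₂),
      mul_nonneg (mul_nonneg hu₁ hu₁) (mul_nonneg hu₁ hu₁)]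
  have key : 2 * ((0.6 * u⁻¹ - 2 * u) * ((1 - 0.6 * 2) * u / ((u - 2 / 5) * (2 * u - 1)))) +
      (1 + 0.6 * 2 - 0.6 * u⁻¹ - 2 * u) * ((1 - 0.6 * 2) * u * (1 - 0.6 - 2 * (2 - 1) * u ^ 2) /
        ((u - 2 / 5) * (2 * u - 1)) ^ 2) =
      7 / 5 - (24/5 * u^4 - 238/25 * u^3 + 877/125 * u^2 - 284/125 * u + 34/125) /
        ((u - 2 / 5) * (2 * u - 1)) ^ 2 := by
    field_simp
    ring
  rw [key]
  linarith [div_nonneg hP (sq_nonneg ((u - 2 / 5) * (2 * u - 1)))]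

theorem deriv_deriv_rho_lt {t : ℝ} (ht : 4 ≤ t) {x : ℝ} (hx : x ∈ Ioo (-log 2) (log 0.6)) :
    deriv (deriv (rho 0.6 2 t)) x < -5 := by
  rw [(hasDerivAt_deriv_rho (by norm_num) (by norm_num) t hx).deriv]
  obtain ⟨h₁, h₂⟩ := exp_mem_Ioo (by norm_num) (by norm_num) hx
  have hA : -0.6 * exp (-x) - 2 * exp x < -2 := by
    have : 1 < 0.6 * exp (-x) := by
      rw [exp_neg, ← div_eq_mul_inv, one_lt_div (exp_pos x)]; exact h₂
    linarith
  have hL := logFactor_nonneg (β := 0.6) (γ := 2) (by norm_num) (by norm_num) hx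
  nlinarith [cross_terms_le h₁ h₂]

theorem four_le_shift :
    4 ≤ (√(0.6 * 2) + 1) / (√(0.6 * 2) - 1) * (log √(2 / 0.6) / (√(2 / 0.6) + 1)) -
      log (1 + √(0.6 / 2)) := by
  have hs : √(0.6 * 2) < 1.0955 := (sqrt_lt' (by norm_num)).2 (by norm_num)
  have hs' : 1 < √(0.6 * 2) := (lt_sqrt (by norm_num)).2 (by norm_num)
  have hc : √(2 / 0.6) < 1.83 := (sqrt_lt' (by norm_num)).2 (by norm_num)
  have hr : √(0.6 / 2) < 0.548 := (sqrt_lt' (by norm_num)).2 (by norm_num)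
  have hlog : 1.186 ≤ log (2 / 0.6) := by
    have h56 := one_sub_inv_le_log_of_pos (show (0 : ℝ) < 5 / 6 by norm_num)
    rw [show (2 / 0.6 : ℝ) = 2 * 2 * (5 / 6) by norm_num, log_mul (by norm_num) (by norm_num),
      log_mul (by norm_num) (by norm_num)]
    norm_num at h56
    linarith [log_two_gt_d9]
  have hfrac : 21.9 ≤ (√(0.6 * 2) + 1) / (√(0.6 * 2) - 1) := by
    rw [le_div_iff₀ (by linarith)]; linarith
  have hratio : 0.2095 ≤ log √(2 / 0.6) / (√(2 / 0.6) + 1) := by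
    rw [log_sqrt (by norm_num), le_div_iff₀ (by positivity)]; linarith
  have hlog1 : log (1 + √(0.6 / 2)) ≤ √(0.6 / 2) := by
    linarith [log_le_sub_one_of_pos (show 0 < 1 + √(0.6 / 2) by positivity)]
  nlinarith [mul_le_mul hfrac hratio (by norm_num) (by linarith)]

end ConcaveRho

open ConcaveRho in
theorem stmt_18 :
    let β : ℝ := 0.6
    let γ : ℝ := 2
    let t : ℝ := (Real.sqrt (β * γ) + 1) / (Real.sqrt (β * γ) - 1) *
        (Real.log (Real.sqrt (γ / β)) / (Real.sqrt (γ / β) + 1)) -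
      Real.log (1 + Real.sqrt (β / γ))
    let ρ : ℝ → ℝ := fun x =>
      (1 + β * γ - β * Real.exp (-x) - γ * Real.exp x) *
        (Real.log (1 + (β - Real.exp x) / (γ * Real.exp x - 1)) + t)
    StrictConcaveOn ℝ (Set.Ioo (-Real.log γ) (Real.log β)) ρ ∧
    ∀ x ∈ Set.Ioo (-Real.log γ) (Real.log β), deriv (deriv ρ) x < -5 := by
  intro β γ t ρ
  have hρ'' : ∀ x ∈ Ioo (-log γ) (log β), deriv (deriv ρ) x < -5 :=
    fun x hx => deriv_deriv_rho_lt four_le_shift hx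
  refine ⟨strictConcaveOn_of_deriv2_neg' (convex_Ioo _ _) ?_ fun x hx => ?_, hρ''⟩
  · exact continuousOn_rho (by norm_num) (by norm_num) t
  · simpa using (hρ'' x hx).trans (by norm_num)
end
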